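/- arXiv:1211.4039 — 9 statements merged into one kernel-verified Lean document; each statement's English description precedes it below -/
import Mathlib

section
/- There exist critical values $x_c > 1$ and $\theta_c > 0$ such that $x_c \int_{\mathbb{X}} H(a) e^{H(a)(x_c-1)} q(da) = \int_{\mathbb{X}} e^{H(a)(x_c-1)} q(da)$, $\theta_c = -\log \int_{\mathbb{X}} H(a) e^{H(a)(x_c-1)} q(da)$, and the function $G_{\theta_c}(x) = e^{\theta_c} \int_{\mathbb{X}} e^{H(a)(x-1)} q(da) - x$ satisfies $G_{\theta_c}(x) \geq 0$ for all $x > 1$ with $G_{\theta_c}(x_c) = 0$ (i.e. $\min_{x>1} G_{\theta_c}(x) = 0$). -/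
/-!
Let `M` be the moment generating function of `H`, which is convex. The point `x_c` is where the
tangent to `x ↦ M (x - 1)` passes through the origin, so its slope `c = M' (x_c - 1)` satisfies
`c x ≤ M (x - 1)` for all `x`, with equality at `x_c`; then `θ_c = -log c`. Such a point is an
interior minimiser of `M (x - 1) / x` on `[1, b]`: the ratio is `1` at `x = 1` and decreasing
there since `M' 0 = ∫ H < 1`, while the growth hypothesis provides `b` with `M (b - 1) > b`.
The minimum value `c` is therefore below `1`, i.e. `θ_c > 0`.
-/

open MeasureTheory Filter Set ProbabilityTheory Real

lemma ProbabilityTheory.convexOn_mgf {Ω : Type*} {m : MeasurableSpace Ω} {X : Ω → ℝ}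
    {μ : Measure Ω} : ConvexOn ℝ (integrableExpSet X μ) (mgf X μ) := by
  refine ⟨convex_integrableExpSet, fun s hs t ht a b ha hb hab => ?_⟩
  calc mgf X μ (a • s + b • t)
      ≤ ∫ ω, (a * exp (s * X ω) + b * exp (t * X ω)) ∂μ := by
        refine integral_mono (convex_integrableExpSet hs ht ha hb hab)
          ((hs.const_mul a).add (ht.const_mul b)) fun ω => ?_
        have := convexOn_exp.2 (mem_univ (s * X ω)) (mem_univ (t * X ω)) ha hb hab
        simp only [smul_eq_mul] at this ⊢
        rwa [add_mul, mul_assoc, mul_assoc]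
    _ = a • mgf X μ s + b • mgf X μ t := by
        rw [integral_add (hs.const_mul a) (ht.const_mul b), integral_const_mul,
          integral_const_mul]
        rfl

lemma ConvexOn.add_mul_sub_le_of_hasDerivAt {S : Set ℝ} {f : ℝ → ℝ} {f' x y : ℝ}
    (hfc : ConvexOn ℝ S f) (hx : x ∈ S) (hy : y ∈ S) (hf : HasDerivAt f f' x) :
    f x + f' * (y - x) ≤ f y := by
  rcases lt_trichotomy x y with hxy | rfl | hyx
  · have := hfc.le_slope_of_hasDerivAt hx hy hxy hf
    rw [slope_def_field, le_div_iff₀ (sub_pos.2 hxy)] at this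
    linarith
  · simp
  · have := hfc.slope_le_of_hasDerivAt hy hx hyx hf
    rw [slope_def_field, div_le_iff₀ (sub_pos.2 hyx)] at this
    linarith

lemma exists_mem_Ioo_mul_deriv_eq {φ φ' : ℝ → ℝ} {b : ℝ}
    (hφ : ∀ x ∈ Icc 1 b, HasDerivAt φ (φ' x) x) (h1 : φ 1 = 1) (hd1 : φ' 1 < 1)
    (hb : 1 < b) (hφb : b < φ b) :
    ∃ x₀ ∈ Ioo 1 b, x₀ * φ' x₀ = φ x₀ ∧ φ x₀ < x₀ := by
  set f : ℝ → ℝ := fun x => φ x / x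
  have hf : ∀ x ∈ Icc 1 b, HasDerivAt f ((φ' x * x - φ x * 1) / x ^ 2) x := fun x hx =>
    (hφ x hx).div (hasDerivAt_id x) (by linarith [hx.1])
  have hf1 : f 1 = 1 := by simp [f, h1]
  obtain ⟨x₀, hx₀, hmin⟩ := isCompact_Icc.exists_isMinOn (nonempty_Icc.2 hb.le)
    fun x hx => (hf x hx).continuousAt.continuousWithinAt
  have hnot : ¬ IsMinOn f (Icc 1 b) 1 := fun h => by
    have := h.localize.hasFDerivWithinAt_nonneg
      (hf 1 (left_mem_Icc.2 hb.le)).hasDerivWithinAt.hasFDerivWithinAt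
      (sub_mem_posTangentConeAt_of_segment_subset ((convex_Icc 1 b).segment_subset
        (left_mem_Icc.2 hb.le) (right_mem_Icc.2 hb.le)))
    simp only [mul_one, one_pow, div_one, ContinuousLinearMap.toSpanSingleton_apply,
      smul_eq_mul] at this
    nlinarith
  have hfx₀ : f x₀ < 1 := by
    by_contra! h
    exact hnot <| isMinOn_iff.2 fun y hy => by rw [hf1]; exact h.trans (isMinOn_iff.1 hmin y hy)
  have hx₀b : x₀ ≠ b := by
    rintro rfl
    have : 1 < f x₀ := (one_lt_div (by linarith)).2 hφb
    linarith
  have hx₀I : x₀ ∈ Ioo 1 b :=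
    ⟨lt_of_le_of_ne hx₀.1 (by rintro rfl; linarith), lt_of_le_of_ne hx₀.2 hx₀b⟩
  have hcrit := (hmin.isLocalMin (Icc_mem_nhds hx₀I.1 hx₀I.2)).hasDerivAt_eq_zero (hf x₀ hx₀)
  have hx₀pos : 0 < x₀ := by linarith [hx₀I.1]
  refine ⟨x₀, hx₀I, ?_, (div_lt_one hx₀pos).1 hfx₀⟩
  field_simp at hcrit
  linarith

theorem stmt_0_general {X : Type*} [MeasurableSpace X] (q : Measure X) [IsProbabilityMeasure q]
    (H : X → ℝ) (hHmean : ∫ a, H a ∂q < 1)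
    (hint : ∀ x : ℝ, Integrable (fun a => Real.exp (x * H a)) q)
    (hgrow : Tendsto (fun x : ℝ => (∫ a, Real.exp (x * H a) ∂q) - x) atTop atTop) :
    ∃ xc θc : ℝ, 1 < xc ∧ 0 < θc ∧
      xc * ∫ a, H a * Real.exp (H a * (xc - 1)) ∂q = ∫ a, Real.exp (H a * (xc - 1)) ∂q ∧
      θc = -Real.log (∫ a, H a * Real.exp (H a * (xc - 1)) ∂q) ∧
      (∀ x > (1 : ℝ), 0 ≤ Real.exp θc * (∫ a, Real.exp (H a * (x - 1)) ∂q) - x) ∧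
      Real.exp θc * (∫ a, Real.exp (H a * (xc - 1)) ∂q) - xc = 0 := by
  have hU : integrableExpSet H q = univ := eq_univ_of_forall hint
  have hM : ∀ t, HasDerivAt (mgf H q) (∫ a, H a * exp (H a * t) ∂q) t := fun t => by
    simpa only [mul_comm t] using hasDerivAt_mgf (X := H) (μ := q) (t := t) (by simp [hU])
  have hmgf : ∀ x, ∫ a, exp (H a * x) ∂q = mgf H q x := fun x => by simp only [mgf, mul_comm]
  obtain ⟨t, ht, ht0⟩ := ((hgrow.eventually_gt_atTop 1).and (eventually_gt_atTop 0)).exists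
  obtain ⟨xc, hxc, htan, hlt⟩ := exists_mem_Ioo_mul_deriv_eq (b := t + 1)
    (φ := fun x => mgf H q (x - 1)) (φ' := fun x => ∫ a, H a * exp (H a * (x - 1)) ∂q)
    (fun x _ => (hM (x - 1)).comp_sub_const x 1) (by simp) (by simpa using hHmean)
    (by linarith) (by simp only [add_sub_cancel_right, mgf]; linarith)
  set c := ∫ a, H a * exp (H a * (xc - 1)) ∂q
  have hc : 0 < c := by nlinarith [mgf_pos (hint (xc - 1)), hxc.1]
  have hc1 : c < 1 := by nlinarith [hxc.1]
  have hbelow : ∀ x, c * x ≤ mgf H q (x - 1) := fun x => by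
    have := (hU ▸ convexOn_mgf).add_mul_sub_le_of_hasDerivAt (mem_univ (xc - 1))
      (mem_univ (x - 1)) (hM (xc - 1))
    linarith
  have hexp : exp (-log c) = c⁻¹ := by rw [exp_neg, exp_log hc]
  refine ⟨xc, -log c, hxc.1, neg_pos.2 (log_neg hc hc1), by rw [hmgf]; exact htan, rfl,
    fun x _ => ?_, ?_⟩
  · rw [hexp, hmgf, sub_nonneg]
    exact (le_inv_mul_iff₀ hc).2 (hbelow x)
  · rw [hexp, hmgf, ← htan]
    field_simp
    ring

/-- existence of critical values `x_c > 1`, `θ_c > 0` such that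
`x_c ∫ H e^{H(x_c-1)} dq = ∫ e^{H(x_c-1)} dq`, `θ_c = -log ∫ H e^{H(x_c-1)} dq`,
and `G_{θ_c}(x) = e^{θ_c} ∫ e^{H(x-1)} dq - x ≥ 0` for all `x > 1`, with
`G_{θ_c}(x_c) = 0`. -/
theorem stmt_0 {X : Type*} [MeasurableSpace X] (q : Measure X) [IsProbabilityMeasure q]
    (H : X → ℝ) (hHmeas : Measurable H) (hHnonneg : ∀ a, 0 ≤ H a)
    (hHmean : ∫ a, H a ∂q < 1)
    (hint : ∀ x : ℝ, Integrable (fun a => Real.exp (x * H a)) q)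
    (hgrow : Tendsto (fun x : ℝ => (∫ a, Real.exp (x * H a) ∂q) - x) atTop atTop) :
    ∃ xc θc : ℝ, 1 < xc ∧ 0 < θc ∧
      xc * ∫ a, H a * Real.exp (H a * (xc - 1)) ∂q = ∫ a, Real.exp (H a * (xc - 1)) ∂q ∧
      θc = -Real.log (∫ a, H a * Real.exp (H a * (xc - 1)) ∂q) ∧
      (∀ x > (1 : ℝ), 0 ≤ Real.exp θc * (∫ a, Real.exp (H a * (x - 1)) ∂q) - x) ∧
      Real.exp θc * (∫ a, Real.exp (H a * (xc - 1)) ∂q) - xc = 0 :=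
  stmt_0_general q H hHmean hint hgrow
end

section
/- For every $\theta \leq \theta_c$ the set of solutions $x \geq 0$ of the fixed-point equation $x = e^\theta \int_{\mathbb{X}} e^{H(a)(x-1)} q(da)$ is nonempty and admits a minimum $f(\theta)$, which satisfies $f(\theta) \leq x_c$; moreover for every $\theta > \theta_c$ the equation $x = e^\theta \int_{\mathbb{X}} e^{H(a)(x-1)} q(da)$ has no solution $x \geq 0$. -/
open MeasureTheory Filter Set

/-- for `θ ≤ θ_c` the fixed-point equation
`x = e^θ ∫ e^{H(x-1)} dq` has a minimal nonnegative solution `f(θ) ≤ x_c`;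
for `θ > θ_c` there is no nonnegative solution. -/
theorem stmt_1 {X : Type*} [MeasurableSpace X] (q : Measure X) [IsProbabilityMeasure q]
    (H : X → ℝ) (hHmeas : Measurable H) (hHnonneg : ∀ a, 0 ≤ H a)
    (hHmean : ∫ a, H a ∂q < 1)
    (hint : ∀ x : ℝ, Integrable (fun a => Real.exp (x * H a)) q)
    (hgrow : Tendsto (fun x : ℝ => (∫ a, Real.exp (x * H a) ∂q) - x) atTop atTop)
    (xc θc : ℝ) (hxc : 1 < xc) (hθc : 0 < θc)
    (hxceq : xc * ∫ a, H a * Real.exp (H a * (xc - 1)) ∂q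
      = ∫ a, Real.exp (H a * (xc - 1)) ∂q)
    (hθceq : θc = -Real.log (∫ a, H a * Real.exp (H a * (xc - 1)) ∂q)) :
    (∀ θ ≤ θc, ∃ fθ : ℝ,
      IsLeast {x : ℝ | 0 ≤ x ∧ x = Real.exp θ * ∫ a, Real.exp (H a * (x - 1)) ∂q} fθ ∧
      fθ ≤ xc) ∧
    (∀ θ > θc, ¬ ∃ x : ℝ, 0 ≤ x ∧ x = Real.exp θ * ∫ a, Real.exp (H a * (x - 1)) ∂q) := by
  set G : ℝ → ℝ := fun x => ∫ a, Real.exp (H a * (x - 1)) ∂q with hGdef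
  -- integrability facts
  have hIntG : ∀ x : ℝ, Integrable (fun a => Real.exp (H a * (x - 1))) q := by
    intro x
    simpa [mul_comm] using hint (x - 1)
  have hIntH : Integrable H q := by
    refine (hint 1).mono hHmeas.aestronglyMeasurable ?_
    filter_upwards with a
    rw [Real.norm_eq_abs, Real.norm_eq_abs, abs_of_nonneg (hHnonneg a),
      abs_of_nonneg (Real.exp_pos _).le, one_mul]
    linarith [Real.add_one_le_exp (H a)]
  have hIntHe : ∀ c : ℝ, Integrable (fun a => H a * Real.exp (H a * c)) q := by
    intro c
    refine (hint (c + 1)).mono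
      ((hHmeas.mul ((hHmeas.mul_const c).exp)).aestronglyMeasurable) ?_
    filter_upwards with a
    rw [Real.norm_eq_abs, Real.norm_eq_abs,
      abs_of_nonneg (mul_nonneg (hHnonneg a) (Real.exp_pos _).le),
      abs_of_nonneg (Real.exp_pos _).le]
    have h1 : H a ≤ Real.exp (H a) := by linarith [Real.add_one_le_exp (H a)]
    calc H a * Real.exp (H a * c) ≤ Real.exp (H a) * Real.exp (H a * c) :=
          mul_le_mul_of_nonneg_right h1 (Real.exp_pos _).le
      _ = Real.exp ((c + 1) * H a) := by rw [← Real.exp_add]; ring_nf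
  -- positivity of G on nonneg reals
  have hHm0 : 0 ≤ ∫ a, H a ∂q := integral_nonneg hHnonneg
  have hGpos : ∀ x : ℝ, 0 ≤ x → 0 < G x := by
    intro x hx
    have hmono : ∫ a, (1 + H a * (x - 1)) ∂q ≤ G x := by
      refine integral_mono ((integrable_const 1).add (hIntH.mul_const _)) (hIntG x) ?_
      intro a
      have := Real.add_one_le_exp (H a * (x - 1))
      simpa [add_comm] using this
    have hcalc : ∫ a, (1 + H a * (x - 1)) ∂q = 1 + (∫ a, H a ∂q) * (x - 1) := by
      rw [integral_add (integrable_const 1) (hIntH.mul_const _), integral_const,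
        integral_mul_const]
      simp
    rw [hcalc] at hmono
    nlinarith [mul_nonneg hHm0 hx]
  -- the derivative-type integral at xc
  set I : ℝ := ∫ a, H a * Real.exp (H a * (xc - 1)) ∂q with hIdef
  have hInn : 0 ≤ I :=
    integral_nonneg fun a => mul_nonneg (hHnonneg a) (Real.exp_pos _).le
  have hIpos : 0 < I := by
    rcases hInn.lt_or_eq with h | h
    · exact h
    · exfalso
      have : θc = 0 := by rw [hθceq, ← h]; simp
      linarith
  have hexpθcI : Real.exp θc * I = 1 := by
    rw [hθceq, Real.exp_neg, Real.exp_log hIpos]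
    field_simp
  have hGxc : Real.exp θc * G xc = xc := by
    have : G xc = xc * I := hxceq.symm
    rw [this]
    calc Real.exp θc * (xc * I) = xc * (Real.exp θc * I) := by ring
      _ = xc := by rw [hexpθcI]; ring
  -- key tangent-line inequality : x ≤ exp θc * G x for all x
  have htangent : ∀ x : ℝ, x ≤ Real.exp θc * G x := by
    intro x
    have hptwise : ∀ a, Real.exp (H a * (xc - 1)) + (x - xc) * (H a * Real.exp (H a * (xc - 1)))
        ≤ Real.exp (H a * (x - 1)) := by
      intro a
      have h1 : 1 + H a * (x - xc) ≤ Real.exp (H a * (x - xc)) := by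
        linarith [Real.add_one_le_exp (H a * (x - xc))]
      have h2 := mul_le_mul_of_nonneg_left h1 (Real.exp_pos (H a * (xc - 1))).le
      calc Real.exp (H a * (xc - 1)) + (x - xc) * (H a * Real.exp (H a * (xc - 1)))
          = Real.exp (H a * (xc - 1)) * (1 + H a * (x - xc)) := by ring
        _ ≤ Real.exp (H a * (xc - 1)) * Real.exp (H a * (x - xc)) := h2
        _ = Real.exp (H a * (x - 1)) := by rw [← Real.exp_add]; ring_nf
    have hmono : ∫ a, (Real.exp (H a * (xc - 1)) + (x - xc) * (H a * Real.exp (H a * (xc - 1)))) ∂q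
        ≤ G x := by
      refine integral_mono ((hIntG xc).add ((hIntHe (xc - 1)).const_mul _)) (hIntG x)
        fun a => hptwise a
    have hcalc : ∫ a, (Real.exp (H a * (xc - 1)) + (x - xc) * (H a * Real.exp (H a * (xc - 1)))) ∂q
        = G xc + (x - xc) * I := by
      rw [integral_add (hIntG xc) ((hIntHe (xc - 1)).const_mul _), integral_const_mul]
    rw [hcalc] at hmono
    have := mul_le_mul_of_nonneg_left hmono (Real.exp_pos θc).le
    have hexp : Real.exp θc * (G xc + (x - xc) * I)
        = xc + (x - xc) := by
      rw [mul_add, hGxc]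
      have : Real.exp θc * ((x - xc) * I) = (x - xc) * (Real.exp θc * I) := by ring
      rw [this, hexpθcI, mul_one]
    rw [hexp] at this
    linarith
  -- continuity of G
  have hGcont : Continuous G := by
    rw [continuous_iff_continuousAt]
    intro x₀
    refine MeasureTheory.continuousAt_of_dominated (bound := fun a => Real.exp (x₀ * H a))
      ?_ ?_ (hint x₀) ?_
    · filter_upwards with x
      exact ((hHmeas.mul_const (x - 1)).exp).aestronglyMeasurable
    · filter_upwards [Metric.ball_mem_nhds x₀ one_pos] with x hx
      filter_upwards with a
      rw [Real.norm_eq_abs, abs_of_nonneg (Real.exp_pos _).le]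
      apply Real.exp_le_exp.2
      have hxlt : x - 1 ≤ x₀ := by
        have := abs_lt.1 (by simpa [Real.dist_eq] using hx)
        linarith [this.2]
      calc H a * (x - 1) ≤ H a * x₀ := mul_le_mul_of_nonneg_left hxlt (hHnonneg a)
        _ = x₀ * H a := mul_comm _ _
    · filter_upwards with a
      exact (Real.continuous_exp.comp ((continuous_const).mul
        (continuous_id.sub continuous_const))).continuousAt
  constructor
  · -- existence of minimal solution for θ ≤ θc
    intro θ hθ
    set S : Set ℝ := {x : ℝ | 0 ≤ x ∧ x = Real.exp θ * G x} with hSdef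
    show ∃ fθ : ℝ, IsLeast S fθ ∧ fθ ≤ xc
    -- IVT-based existence of a solution in [0, xc]
    have hψcont : ContinuousOn (fun x => Real.exp θ * G x - x) (Icc 0 xc) :=
      ((continuous_const.mul hGcont).sub continuous_id).continuousOn
    have hψ0 : 0 ≤ Real.exp θ * G 0 - 0 := by
      have h1 := hGpos 0 le_rfl
      have h2 := Real.exp_pos θ
      nlinarith
    have hψxc : Real.exp θ * G xc - xc ≤ 0 := by
      have hGxcpos : 0 < G xc := hGpos xc (by linarith)
      have : Real.exp θ * G xc ≤ Real.exp θc * G xc :=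
        mul_le_mul_of_nonneg_right (Real.exp_le_exp.2 hθ) hGxcpos.le
      linarith [hGxc]
    have h0mem : (0:ℝ) ∈ Icc (Real.exp θ * G xc - xc) (Real.exp θ * G 0 - 0) :=
      ⟨hψxc, hψ0⟩
    obtain ⟨x₀, hx₀Icc, hx₀eq⟩ :=
      intermediate_value_Icc' (by linarith : (0:ℝ) ≤ xc) hψcont h0mem
    have hx₀S : x₀ ∈ S := by
      refine ⟨hx₀Icc.1, ?_⟩
      have : Real.exp θ * G x₀ - x₀ = 0 := hx₀eq
      linarith
    have hSclosed : IsClosed S := by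
      have : S = Ici 0 ∩ {x : ℝ | x = Real.exp θ * G x} := by
        ext y; simp [hSdef, Set.mem_inter_iff]
      rw [this]
      exact isClosed_Ici.inter (isClosed_eq continuous_id (continuous_const.mul hGcont))
    have hSbdd : BddBelow S := ⟨0, fun y hy => hy.1⟩
    refine ⟨sInf S, ⟨hSclosed.csInf_mem ⟨x₀, hx₀S⟩ hSbdd, fun y hy => csInf_le hSbdd hy⟩, ?_⟩
    exact le_trans (csInf_le hSbdd hx₀S) hx₀Icc.2
  · -- no solution for θ > θc
    rintro θ hθ ⟨x, hx0, hxeq⟩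
    have hGx : 0 < G x := hGpos x hx0
    have h1 : Real.exp θc * G x < Real.exp θ * G x :=
      mul_lt_mul_of_pos_right (Real.exp_lt_exp.2 hθ) hGx
    have h2 := htangent x
    have hxeq' : x = Real.exp θ * G x := hxeq
    linarith
end

section
/- Fix $\nu > 0$, $m \in (0,1)$ and $c \in \mathbb{R}$ with $c \leq m - 1 - \log m$, and define $\varphi(K) = \left(c + 1 - \frac{1}{K} - \log K\right) \cdot \frac{K\nu}{1 - Km}$ for $K \in (0, 1/m)$. Then $\sup_{0 < K < 1/m} \varphi(K) = \nu(\hat{x} - 1)$, where $\hat{x}$ is the minimal solution $x \geq 0$ of the equation $x = e^{c + m(x-1)}$ (which exists under the stated condition on $c$). -/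
open Filter Set Real Topology

/-! Substituting `c = log x̂ - m (x̂ - 1)` gives
`ν (x̂ - 1) - φ K = ν (x̂ - K - K log (x̂ / K)) / (1 - K m)`. This gap is nonnegative because
`log t ≤ t - 1`, and since `x̂ ≤ 1 / m` it is at most `ν (x̂ - K) / (m x̂)` for `K < x̂`, so
`φ K → ν (x̂ - 1)` as `K ↑ x̂`. The existence of `x̂ ≤ 1 / m` is the intermediate value theorem
on `[0, 1 / m]`, where the condition on `c` makes `e^{c + m(x-1)} ≤ x` at `x = 1 / m`. -/

/-- The paper's `φ`. -/
noncomputable def tiltObjective (ν m c K : ℝ) : ℝ :=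
  (c + 1 - 1 / K - log K) * (K * ν / (1 - K * m))

lemma sub_sub_mul_log_div_nonneg {x K : ℝ} (hx : 0 < x) (hK : 0 < K) :
    0 ≤ x - K - K * log (x / K) := by
  have h := log_le_sub_one_of_pos (div_pos hx hK)
  have : K * log (x / K) ≤ x - K := by
    calc K * log (x / K) ≤ K * (x / K - 1) := mul_le_mul_of_nonneg_left h hK.le
      _ = x - K := by field_simp
  linarith

lemma sub_sub_mul_log_div_le {x K : ℝ} (hx : 0 < x) (hK : 0 < K) :
    x - K - K * log (x / K) ≤ (x - K) ^ 2 / x := by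
  have h := log_le_sub_one_of_pos (div_pos hK hx)
  rw [log_div hK.ne' hx.ne'] at h
  rw [log_div hx.ne' hK.ne']
  calc x - K - K * (log x - log K) = x - K + K * (log K - log x) := by ring
    _ ≤ x - K + K * (K / x - 1) := by gcongr
    _ = (x - K) ^ 2 / x := by field_simp; ring

lemma tiltObjective_eq_sub {ν m c x K : ℝ} (hx : 0 < x) (hK : 0 < K) (hKm : K * m ≠ 1)
    (hlog : log x = c + m * (x - 1)) :
    tiltObjective ν m c K = ν * (x - 1) - ν * (x - K - K * log (x / K)) / (1 - K * m) := by
  have hc : c = log x - m * (x - 1) := by linarith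
  have hD : 1 - m * K ≠ 0 := by rw [mul_comm]; exact sub_ne_zero.mpr (Ne.symm hKm)
  rw [tiltObjective, hc, log_div hx.ne' hK.ne']
  field_simp
  ring

section

variable {ν m c x : ℝ}

lemma tiltObjective_le (hν : 0 < ν) (hx : 0 < x) (hlog : log x = c + m * (x - 1))
    {K : ℝ} (hK : 0 < K) (hKm : K * m < 1) :
    tiltObjective ν m c K ≤ ν * (x - 1) := by
  rw [tiltObjective_eq_sub hx hK hKm.ne hlog, sub_le_self_iff]
  exact div_nonneg (mul_nonneg hν.le (sub_sub_mul_log_div_nonneg hx hK)) (by linarith)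

lemma sub_div_le_tiltObjective (hν : 0 < ν) (hm : 0 < m) (hx : 0 < x) (hmx : m * x ≤ 1)
    (hlog : log x = c + m * (x - 1)) {K : ℝ} (hK : 0 < K) (hKx : K < x) :
    ν * (x - 1) - ν * (x - K) / (m * x) ≤ tiltObjective ν m c K := by
  have hKm : K * m < 1 := by nlinarith
  rw [tiltObjective_eq_sub hx hK hKm.ne hlog, sub_le_sub_iff_left]
  have hxK : 0 < x - K := by linarith
  have hD : m * (x - K) ≤ 1 - K * m := by nlinarith
  calc ν * (x - K - K * log (x / K)) / (1 - K * m)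
      ≤ ν * ((x - K) ^ 2 / x) / (m * (x - K)) := by
        refine div_le_div₀ (by positivity) ?_ (by positivity) hD
        exact mul_le_mul_of_nonneg_left (sub_sub_mul_log_div_le hx hK) hν.le
    _ = ν * (x - K) / (m * x) := by field_simp

lemma tendsto_tiltObjective (hν : 0 < ν) (hm : 0 < m) (hx : 0 < x) (hmx : m * x ≤ 1)
    (hlog : log x = c + m * (x - 1)) :
    Tendsto (tiltObjective ν m c) (𝓝[<] x) (𝓝 (ν * (x - 1))) := by
  have hlower : Tendsto (fun K => ν * (x - 1) - ν * (x - K) / (m * x)) (𝓝[<] x)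
      (𝓝 (ν * (x - 1))) := by
    have : Continuous fun K => ν * (x - 1) - ν * (x - K) / (m * x) := by fun_prop
    simpa using (this.tendsto x).mono_left nhdsWithin_le_nhds
  have hnear : ∀ᶠ K in 𝓝[<] x, K ∈ Ioo 0 x := Ioo_mem_nhdsLT hx
  refine tendsto_of_tendsto_of_tendsto_of_le_of_le' hlower tendsto_const_nhds ?_ ?_
  · filter_upwards [hnear] with K hK
    exact sub_div_le_tiltObjective hν hm hx hmx hlog hK.1 hK.2
  · filter_upwards [hnear] with K hK
    exact tiltObjective_le hν hx hlog hK.1 (by nlinarith [hK.1, hK.2])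

lemma isLUB_tiltObjective (hν : 0 < ν) (hm : 0 < m) (hx : 0 < x) (hmx : m * x ≤ 1)
    (hlog : log x = c + m * (x - 1)) :
    IsLUB (tiltObjective ν m c '' Ioo 0 (1 / m)) (ν * (x - 1)) := by
  refine isLUB_of_mem_closure ?_ ?_
  · rintro _ ⟨K, ⟨hK, hKm⟩, rfl⟩
    exact tiltObjective_le hν hx hlog hK (by rwa [lt_div_iff₀ hm] at hKm)
  · refine mem_closure_of_tendsto (tendsto_tiltObjective hν hm hx hmx hlog) ?_
    filter_upwards [Ioo_mem_nhdsLT hx] with K hK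
    exact mem_image_of_mem _ ⟨hK.1, hK.2.trans_le ((le_div_iff₀' hm).mpr hmx)⟩

end

lemma exists_fixedPoint_mem_Icc {m c : ℝ} (hm : 0 < m) (hc : c ≤ m - 1 - log m) :
    ∃ x ∈ Icc 0 (1 / m), x = exp (c + m * (x - 1)) := by
  have hend : exp (c + m * (1 / m - 1)) ≤ 1 / m := by
    calc exp (c + m * (1 / m - 1)) ≤ exp (log (1 / m)) := by
          gcongr
          rw [one_div, log_inv]
          field_simp
          linarith
      _ = 1 / m := exp_log (by positivity)
  obtain ⟨x, hx, hfx⟩ := intermediate_value_Icc' (a := 0) (b := 1 / m)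
    (f := fun x => exp (c + m * (x - 1)) - x) (by positivity) (by fun_prop)
    ⟨sub_nonpos.mpr hend, by simpa using (exp_pos _).le⟩
  exact ⟨x, hx, (sub_eq_zero.mp hfx).symm⟩

theorem stmt_5_general (ν m c : ℝ) (hν : 0 < ν) (hm0 : 0 < m)
    (hc : c ≤ m - 1 - Real.log m) :
    ∃ xh : ℝ, IsLeast {x : ℝ | 0 ≤ x ∧ x = Real.exp (c + m * (x - 1))} xh ∧
      IsLUB ((fun K : ℝ => (c + 1 - 1 / K - Real.log K) * (K * ν / (1 - K * m))) ''
        Ioo 0 (1 / m)) (ν * (xh - 1)) := by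
  set S := {x : ℝ | 0 ≤ x ∧ x = exp (c + m * (x - 1))}
  obtain ⟨r, hr, hr_fix⟩ := exists_fixedPoint_mem_Icc hm0 hc
  have hS : IsClosed S :=
    (isClosed_le continuous_const continuous_id).inter (isClosed_eq continuous_id (by fun_prop))
  have hleast : IsLeast S (sInf S) := hS.isLeast_csInf ⟨r, hr.1, hr_fix⟩ ⟨0, fun _ hx => hx.1⟩
  obtain ⟨-, hfix⟩ := hleast.1
  have hpos : 0 < sInf S := hfix ▸ exp_pos _
  have hmx : m * sInf S ≤ 1 := by
    have := (hleast.2 ⟨hr.1, hr_fix⟩).trans hr.2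
    rwa [le_div_iff₀' hm0] at this
  have hlog : log (sInf S) = c + m * (sInf S - 1) := by rw [hfix, log_exp, ← hfix]
  exact ⟨sInf S, hleast, isLUB_tiltObjective hν hm0 hpos hmx hlog⟩

/-- for `ν > 0`, `m ∈ (0,1)` and `c ≤ m - 1 - log m`, the minimal
nonnegative solution `x̂` of `x = e^{c + m(x-1)}` exists, and
`sup_{0<K<1/m} (c + 1 - 1/K - log K) · Kν/(1-Km) = ν (x̂ - 1)`. -/
theorem stmt_5 (ν m c : ℝ) (hν : 0 < ν) (hm0 : 0 < m) (hm1 : m < 1)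
    (hc : c ≤ m - 1 - Real.log m) :
    ∃ xh : ℝ, IsLeast {x : ℝ | 0 ≤ x ∧ x = Real.exp (c + m * (x - 1))} xh ∧
      IsLUB ((fun K : ℝ => (c + 1 - 1 / K - Real.log K) * (K * ν / (1 - K * m))) ''
        Ioo 0 (1 / m)) (ν * (xh - 1)) :=
  stmt_5_general ν m c hν hm0 hc
end

section
/- Fix $\nu > 0$ and $x > 0$, and suppose $\theta_* \in \mathbb{R}$ and $x_* \geq 1$ solve the system $x_* = \int_{\mathbb{X}} e^{\theta_* + (x_*-1)H(a)} q(da)$ and $\frac{x}{\nu} = x_* + \frac{x}{\nu} \int_{\mathbb{X}} H(a) e^{\theta_* + (x_*-1)H(a)} q(da)$. Then the infimum over all probability measures $\hat{q} \ll q$ with finite relative entropy of $x \int_{\mathbb{X}} H\, d\hat{q} + \nu - x + x \log\left(\frac{x}{x\int_{\mathbb{X}} H\, d\hat{q} + \nu}\right) + x\, D(\hat{q}\|q)$ equals $\theta_* x - \nu(x_* - 1)$, and it is attained at the tilted measure $dq_* = \frac{e^{(x_*-1)H(a)}}{\int_{\mathbb{X}} e^{(x_*-1)H(b)} q(db)}\,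 dq$. -/
/-
The lower bound combines two tangent-line inequalities. By the Gibbs variational principle,
`D(q̂‖q) ≥ (x_* - 1) ∫ H dq̂ - log Z` with `Z = ∫ e^{(x_*-1)H} dq`, with equality at the tilted
measure `q_*`; and by concavity of `log`, `log s ≤ log (x/x_*) + s x_*/x - 1` for
`s = x ∫ H dq̂ + ν`. Adding them, the `∫ H dq̂` terms cancel and the first equation
(`θ_* = log x_* - log Z`) turns the bound into `θ_* x - ν (x_* - 1)`. The second equation says
exactly `x ∫ H dq_* + ν = x/x_*`, so both inequalities are equalities at `q_*`.
-/

open MeasureTheory Filter Set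

open Real InformationTheory

section Tilted

variable {α : Type*} [MeasurableSpace α] {μ ρ : Measure α} {f : α → ℝ}

lemma integral_sub_log_integral_exp_le_integral_llr
    [IsProbabilityMeasure μ] [IsProbabilityMeasure ρ] (hρμ : ρ ≪ μ)
    (hllr : Integrable (llr ρ μ) ρ) (hfρ : Integrable f ρ)
    (hfμ : Integrable (fun a ↦ exp (f a)) μ) :
    ∫ a, f a ∂ρ - log (∫ a, exp (f a) ∂μ) ≤ ∫ a, llr ρ μ a ∂ρ := by
  have := isProbabilityMeasure_tilted hfμ
  have hgibbs := integral_llr_add_sub_measure_univ_nonneg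
    (hρμ.trans (absolutelyContinuous_tilted hfμ)) (integrable_llr_tilted_right hρμ hfρ hllr hfμ)
  rw [integral_llr_tilted_right hρμ hfρ hfμ hllr] at hgibbs
  simp only [probReal_univ] at hgibbs
  linarith

lemma llr_tilted_left_self_ae_eq [SigmaFinite μ] (hfμ : Integrable (fun a ↦ exp (f a)) μ) :
    llr (μ.tilted f) μ =ᵐ[μ.tilted f] fun a ↦ f a - log (∫ a, exp (f a) ∂μ) :=
  (tilted_absolutelyContinuous μ f).ae_le (log_rnDeriv_tilted_left_self hfμ)

lemma integrable_llr_tilted_left_self [SigmaFinite μ] (hfμ : Integrable (fun a ↦ exp (f a)) μ)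
    (hf : Integrable f (μ.tilted f)) : Integrable (llr (μ.tilted f) μ) (μ.tilted f) :=
  (hf.sub (integrable_const _)).congr (llr_tilted_left_self_ae_eq hfμ).symm

lemma integral_llr_tilted_left_self [SigmaFinite μ] [NeZero μ]
    (hfμ : Integrable (fun a ↦ exp (f a)) μ) (hf : Integrable f (μ.tilted f)) :
    ∫ a, llr (μ.tilted f) μ a ∂(μ.tilted f)
      = ∫ a, f a ∂(μ.tilted f) - log (∫ a, exp (f a) ∂μ) := by
  have := isProbabilityMeasure_tilted hfμ
  rw [integral_congr_ae (llr_tilted_left_self_ae_eq hfμ), integral_sub hf (integrable_const _)]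
  simp

lemma integral_mul_exp_add_eq [NeZero μ] (hfμ : Integrable (fun a ↦ exp (f a)) μ)
    (g : α → ℝ) (θ : ℝ) :
    ∫ a, g a * exp (θ + f a) ∂μ
      = exp θ * (∫ a, exp (f a) ∂μ) * ∫ a, g a ∂(μ.tilted f) := by
  have hZ := (integral_exp_pos hfμ).ne'
  simp_rw [integral_tilted, smul_eq_mul, div_mul_eq_mul_div, integral_div, exp_add,
    mul_left_comm (g _), integral_const_mul, mul_comm (g _)]
  field_simp

lemma integrable_tilted_mul_of_nonneg {H : α → ℝ} {t : ℝ} (hHm : AEStronglyMeasurable H μ)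
    (hH : ∀ a, 0 ≤ H a) (ht : Integrable (fun a ↦ exp (t * H a)) μ)
    (ht₁ : Integrable (fun a ↦ exp ((t + 1) * H a)) μ) :
    Integrable H (μ.tilted fun a ↦ t * H a) := by
  rw [integrable_tilted_iff ht]
  refine ht₁.mono (ht.1.smul hHm) (ae_of_all _ fun a ↦ ?_)
  have hHexp : H a ≤ exp (H a) := by linarith [add_one_le_exp (H a)]
  rw [smul_eq_mul, norm_mul, norm_of_nonneg (exp_pos _).le, norm_of_nonneg (hH a),
    norm_of_nonneg (exp_pos _).le, add_one_mul, exp_add]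
  exact mul_le_mul_of_nonneg_left hHexp (exp_pos _).le

end Tilted

/-- The functional minimised in the variational formula, as a function of `m = ∫ H dq̂` and
`D = D(q̂‖q)`. -/
noncomputable def rateObjective (x ν m D : ℝ) : ℝ :=
  x * m + ν - x + x * log (x / (x * m + ν)) + x * D

lemma le_rateObjective {x ν c m L D : ℝ} (hx : 0 < x) (hc : 0 < c) (hs : 0 < x * m + ν)
    (hD : (c - 1) * m - L ≤ D) :
    (log c - L) * x - ν * (c - 1) ≤ rateObjective x ν m D := by
  -- tangent line of the concave `log` at `x / c`
  have htangent : x * log c + x - (x * m + ν) * c ≤ x * log (x / (x * m + ν)) := by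
    have h := one_sub_inv_le_log_of_pos (show 0 < x / ((x * m + ν) * c) by positivity)
    rw [← div_div, log_div (by positivity) hc.ne', inv_div] at h
    have hcancel : x * (c / (x / (x * m + ν))) = (x * m + ν) * c := by field_simp
    linear_combination x * h + hcancel
  unfold rateObjective
  linear_combination htangent + x * hD

lemma rateObjective_eq {x ν c m L : ℝ} (hx : x ≠ 0) (hc : c ≠ 0) (hm : x * m + ν = x / c) :
    rateObjective x ν m ((c - 1) * m - L) = (log c - L) * x - ν * (c - 1) := by
  have hxm : x * m = x / c - ν := by linarith
  rw [rateObjective, hm, div_div_cancel₀ hx]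
  have : c * (x / c) = x := by field_simp
  linear_combination (c - 1) * hxm + this

theorem stmt_6_general {X : Type*} [MeasurableSpace X] (q : Measure X) [IsProbabilityMeasure q]
    (H : X → ℝ) (hHmeas : Measurable H) (hHnonneg : ∀ a, 0 ≤ H a)
    (hint : ∀ x : ℝ, Integrable (fun a => Real.exp (x * H a)) q)
    (ν x : ℝ) (hν : 0 < ν) (hx : 0 < x)
    (θs xs : ℝ) (hxs : 1 ≤ xs)
    (heq1 : xs = ∫ a, Real.exp (θs + (xs - 1) * H a) ∂q)
    (heq2 : x / ν = xs + x / ν * ∫ a, H a * Real.exp (θs + (xs - 1) * H a) ∂q) :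
    IsLeast {y : ℝ | ∃ qh : Measure X, IsProbabilityMeasure qh ∧ qh ≪ q ∧
        Integrable (fun a => Real.log ((qh.rnDeriv q a).toReal)) qh ∧
        Integrable H qh ∧
        y = x * (∫ a, H a ∂qh) + ν - x
            + x * Real.log (x / (x * (∫ a, H a ∂qh) + ν))
            + x * ∫ a, Real.log ((qh.rnDeriv q a).toReal) ∂qh}
      (θs * x - ν * (xs - 1)) ∧
    ∀ qstar : Measure X,
      qstar = q.withDensity (fun a =>
        ENNReal.ofReal (Real.exp ((xs - 1) * H a) / ∫ b, Real.exp ((xs - 1) * H b) ∂q)) →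
      x * (∫ a, H a ∂qstar) + ν - x
          + x * Real.log (x / (x * (∫ a, H a ∂qstar) + ν))
          + x * ∫ a, Real.log ((qstar.rnDeriv q a).toReal) ∂qstar
        = θs * x - ν * (xs - 1) := by
  set f : X → ℝ := fun a ↦ (xs - 1) * H a
  set Q := q.tilted f
  set Z := ∫ a, exp (f a) ∂q
  have hf : Integrable (fun a ↦ exp (f a)) q := hint (xs - 1)
  have hQ : IsProbabilityMeasure Q := isProbabilityMeasure_tilted hf
  have hxs₀ : 0 < xs := by linarith
  have hHQ : Integrable H Q := integrable_tilted_mul_of_nonneg hHmeas.aestronglyMeasurable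
    hHnonneg hf (by simpa using hint xs)
  have hfQ : Integrable f Q := hHQ.const_mul _
  simp_rw [exp_add, integral_const_mul] at heq1
  have hθs : θs = log xs - log Z := by
    rw [heq1, log_mul (exp_pos _).ne' (integral_exp_pos hf).ne', log_exp]
    ring
  have hmean : x * ∫ a, H a ∂Q + ν = x / xs := by
    rw [integral_mul_exp_add_eq hf H θs, ← heq1] at heq2
    field_simp at heq2 ⊢
    linarith
  have hvalue : rateObjective x ν (∫ a, H a ∂Q) (∫ a, llr Q q a ∂Q)
      = θs * x - ν * (xs - 1) := by
    have hD := integral_llr_tilted_left_self hf hfQ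
    rw [integral_const_mul] at hD
    rw [hD, hθs]
    exact rateObjective_eq hx.ne' hxs₀.ne' hmean
  refine ⟨⟨⟨Q, hQ, tilted_absolutelyContinuous q f, integrable_llr_tilted_left_self hf hfQ,
    hHQ, hvalue.symm⟩, ?_⟩, fun qstar hqstar ↦ hqstar ▸ hvalue⟩
  rintro y ⟨ρ, hρ, hρq, hllr, hHρ, rfl⟩
  have hD := integral_sub_log_integral_exp_le_integral_llr hρq hllr (hHρ.const_mul (xs - 1)) hf
  rw [integral_const_mul] at hD
  have hm : 0 ≤ ∫ a, H a ∂ρ := integral_nonneg hHnonneg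
  rw [hθs]
  exact le_rateObjective hx hxs₀ (by positivity) hD

/-- the variational formula for the rate function. If `(θ_*, x_*)` solves
`x_* = ∫ e^{θ_* + (x_*-1)H} dq` and `x/ν = x_* + (x/ν) ∫ H e^{θ_* + (x_*-1)H} dq`,
then the infimum over probability measures `q̂ ≪ q` with finite relative entropy of
`x ∫ H dq̂ + ν - x + x log (x / (x ∫ H dq̂ + ν)) + x D(q̂‖q)`
equals `θ_* x - ν (x_* - 1)`, attained at the tilted measure
`dq_* = e^{(x_*-1)H} / (∫ e^{(x_*-1)H} dq) dq`. -/
theorem stmt_6 {X : Type*} [MeasurableSpace X] (q : Measure X) [IsProbabilityMeasure q]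
    (H : X → ℝ) (hHmeas : Measurable H) (hHnonneg : ∀ a, 0 ≤ H a)
    (hHmean : ∫ a, H a ∂q < 1)
    (hint : ∀ x : ℝ, Integrable (fun a => Real.exp (x * H a)) q)
    (ν x : ℝ) (hν : 0 < ν) (hx : 0 < x)
    (θs xs : ℝ) (hxs : 1 ≤ xs)
    (heq1 : xs = ∫ a, Real.exp (θs + (xs - 1) * H a) ∂q)
    (heq2 : x / ν = xs + x / ν * ∫ a, H a * Real.exp (θs + (xs - 1) * H a) ∂q) :
    IsLeast {y : ℝ | ∃ qh : Measure X, IsProbabilityMeasure qh ∧ qh ≪ q ∧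
        Integrable (fun a => Real.log ((qh.rnDeriv q a).toReal)) qh ∧
        Integrable H qh ∧
        y = x * (∫ a, H a ∂qh) + ν - x
            + x * Real.log (x / (x * (∫ a, H a ∂qh) + ν))
            + x * ∫ a, Real.log ((qh.rnDeriv q a).toReal) ∂qh}
      (θs * x - ν * (xs - 1)) ∧
    ∀ qstar : Measure X,
      qstar = q.withDensity (fun a =>
        ENNReal.ofReal (Real.exp ((xs - 1) * H a) / ∫ b, Real.exp ((xs - 1) * H b) ∂q)) →
      x * (∫ a, H a ∂qstar) + ν - x
          + x * Real.log (x / (x * (∫ a, H a ∂qstar) + ν))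
          + x * ∫ a, Real.log ((qstar.rnDeriv q a).toReal) ∂qstar
        = θs * x - ν * (xs - 1) :=
  stmt_6_general q H hHmeas hHnonneg hint ν x hν hx θs xs hxs heq1 heq2
end

section
/- Fix $\nu > 0$ and define $\Gamma(\theta) = \nu(f(\theta) - 1)$ for $\theta \leq \theta_c$ and $\Gamma(\theta) = +\infty$ for $\theta > \theta_c$, where $f(\theta)$ is the minimal solution of $x = e^\theta \int_{\mathbb{X}} e^{H(a)(x-1)} q(da)$. Let $x > 0$ and suppose $\theta_* \leq \theta_c$ and $x_* = f(\theta_*)$ solve the system $x_* = \int_{\mathbb{X}} e^{\theta_* + (x_*-1)H(a)} q(da)$ and $\frac{x}{\nu} = x_* + \frac{x}{\nu} \int_{\mathbb{X}} H(a) e^{\theta_* + (x_*-1)H(a)} q(da)$. Then the Legendre–Fenchel transform satisfies $\sup_{\theta \in \mathbb{R}} \{\theta x - \Gamma(\theta)\} = \theta_* x - \nu(x_* - 1)$. -/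
open MeasureTheory Filter Set

/-- the Legendre–Fenchel transform of
`Γ(θ) = ν (f(θ) - 1)` for `θ ≤ θ_c`, `Γ(θ) = +∞` for `θ > θ_c`, satisfies
`sup_θ {θ x - Γ(θ)} = θ_* x - ν (x_* - 1)` where `(θ_*, x_* = f(θ_*))` solves the
stated system. -/
theorem stmt_7 {X : Type*} [MeasurableSpace X] (q : Measure X) [IsProbabilityMeasure q]
    (H : X → ℝ) (hHmeas : Measurable H) (hHnonneg : ∀ a, 0 ≤ H a)
    (hHmean : ∫ a, H a ∂q < 1)
    (hint : ∀ x : ℝ, Integrable (fun a => Real.exp (x * H a)) q)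
    (hgrow : Tendsto (fun x : ℝ => (∫ a, Real.exp (x * H a) ∂q) - x) atTop atTop)
    (xc θc : ℝ) (hxc : 1 < xc) (hθc : 0 < θc)
    (hxceq : xc * ∫ a, H a * Real.exp (H a * (xc - 1)) ∂q
      = ∫ a, Real.exp (H a * (xc - 1)) ∂q)
    (hθceq : θc = -Real.log (∫ a, H a * Real.exp (H a * (xc - 1)) ∂q))
    (ν : ℝ) (hν : 0 < ν)
    (f : ℝ → ℝ)
    (hf : ∀ θ ≤ θc,
      IsLeast {y : ℝ | 0 ≤ y ∧ y = Real.exp θ * ∫ a, Real.exp (H a * (y - 1)) ∂q} (f θ))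
    (x : ℝ) (hx : 0 < x)
    (θs : ℝ) (hθs : θs ≤ θc) (xs : ℝ) (hxsf : xs = f θs)
    (heq1 : xs = ∫ a, Real.exp (θs + (xs - 1) * H a) ∂q)
    (heq2 : x / ν = xs + x / ν * ∫ a, H a * Real.exp (θs + (xs - 1) * H a) ∂q) :
    IsLUB {y : EReal | ∃ θ : ℝ,
        y = ((θ * x : ℝ) : EReal)
            - (if θ ≤ θc then (((ν * (f θ - 1) : ℝ)) : EReal) else (⊤ : EReal))}
      (((θs * x - ν * (xs - 1) : ℝ)) : EReal) := by

  -- abbreviations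
  set m : ℝ := ∫ a, H a * Real.exp (θs + (xs - 1) * H a) ∂q with hm
  -- integrability facts
  have hintc : ∀ θ' c : ℝ, Integrable (fun a => Real.exp (θ' + c * H a)) q := by
    intro θ' c
    have h := (hint c).const_mul (Real.exp θ')
    simpa [← Real.exp_add] using h
  have hintH : ∀ θ' c : ℝ, Integrable (fun a => H a * Real.exp (θ' + c * H a)) q := by
    intro θ' c
    refine ((hint (c + 1)).const_mul (Real.exp θ')).mono
      (hHmeas.mul (measurable_const.add (hHmeas.const_mul c)).exp).aestronglyMeasurable
      (Filter.Eventually.of_forall fun a => ?_)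
    have h1 : H a ≤ Real.exp (H a) := (Real.add_one_le_exp (H a)).trans' (by linarith [hHnonneg a])
    have h2 : H a * Real.exp (θ' + c * H a) ≤ Real.exp θ' * Real.exp ((c + 1) * H a) := by
      have := mul_le_mul_of_nonneg_right h1 (Real.exp_pos (θ' + c * H a)).le
      calc H a * Real.exp (θ' + c * H a) ≤ Real.exp (H a) * Real.exp (θ' + c * H a) := this
        _ = Real.exp θ' * Real.exp ((c + 1) * H a) := by
            rw [← Real.exp_add, ← Real.exp_add]; ring_nf
    have h0 : 0 ≤ H a * Real.exp (θ' + c * H a) :=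
      mul_nonneg (hHnonneg a) (Real.exp_pos _).le
    have h0' : 0 ≤ Real.exp θ' * Real.exp ((c + 1) * H a) :=
      mul_nonneg (Real.exp_pos _).le (Real.exp_pos _).le
    rw [Real.norm_eq_abs, Real.norm_eq_abs, abs_of_nonneg h0, abs_of_nonneg h0']
    exact h2
  have hxs_pos : 0 < xs := by
    rw [heq1]; exact integral_exp_pos (hintc θs (xs - 1))
  have hxν : 0 < x / ν := div_pos hx hν
  have h1m : x / ν * (1 - m) = xs := by rw [mul_sub, mul_one]; linarith [heq2]
  have h1mpos : 0 < 1 - m := by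
    rcases lt_trichotomy (1 - m) 0 with h | h | h
    · nlinarith
    · nlinarith
    · exact h
  have h1m' : x * (1 - m) = ν * xs := by
    field_simp at h1m; linarith
  -- key inequality
  have key : ∀ θ ≤ θc, θ * x - ν * (f θ - 1) ≤ θs * x - ν * (xs - 1) := by
    intro θ hθ
    obtain ⟨⟨hy0, hyeq⟩, -⟩ := hf θ hθ
    set y := f θ with hy
    have hyint : (∫ a, Real.exp (θ + (y - 1) * H a) ∂q) = y := by
      have hstep : (∫ a, Real.exp (θ + (y - 1) * H a) ∂q)
          = Real.exp θ * ∫ a, Real.exp (H a * (y - 1)) ∂q := by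
        rw [← integral_const_mul]
        congr 1; funext a
        rw [← Real.exp_add]; ring_nf
      rw [hstep, ← hyeq]
    have hpt : ∀ a, ((1 + (θ - θs)) + (y - xs) * H a) * Real.exp (θs + (xs - 1) * H a)
        ≤ Real.exp (θ + (y - 1) * H a) := by
      intro a
      have h1 : ((θ - θs) + (y - xs) * H a) + 1 ≤ Real.exp ((θ - θs) + (y - xs) * H a) :=
        Real.add_one_le_exp _
      have h2 : Real.exp (θ + (y - 1) * H a)
          = Real.exp ((θ - θs) + (y - xs) * H a) * Real.exp (θs + (xs - 1) * H a) := by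
        rw [← Real.exp_add]; ring_nf
      nlinarith [Real.exp_pos (θs + (xs - 1) * H a),
        mul_le_mul_of_nonneg_right h1 (Real.exp_pos (θs + (xs - 1) * H a)).le]
    have hintL : Integrable
        (fun a => ((1 + (θ - θs)) + (y - xs) * H a) * Real.exp (θs + (xs - 1) * H a)) q := by
      have h := ((hintc θs (xs - 1)).const_mul (1 + (θ - θs))).add
        ((hintH θs (xs - 1)).const_mul (y - xs))
      exact h.congr (Filter.Eventually.of_forall fun a => by simp only [Pi.add_apply]; ring)
    have hle := integral_mono hintL (hintc θ (y - 1)) hpt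
    have hL : (∫ a, ((1 + (θ - θs)) + (y - xs) * H a) * Real.exp (θs + (xs - 1) * H a) ∂q)
        = (1 + (θ - θs)) * xs + (y - xs) * m := by
      have : (fun a => ((1 + (θ - θs)) + (y - xs) * H a) * Real.exp (θs + (xs - 1) * H a))
          = fun a => (1 + (θ - θs)) * Real.exp (θs + (xs - 1) * H a)
            + (y - xs) * (H a * Real.exp (θs + (xs - 1) * H a)) := by
        funext a; ring
      rw [this, integral_add ((hintc θs (xs - 1)).const_mul _)
        ((hintH θs (xs - 1)).const_mul _), integral_const_mul, integral_const_mul,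
        ← heq1, hm]
    rw [hL, hyint] at hle
    -- hle : (1 + (θ - θs)) * xs + (y - xs) * m ≤ y
    have hA : xs * (θ - θs) ≤ (y - xs) * (1 - m) := by nlinarith
    nlinarith [mul_le_mul_of_nonneg_left hA hν.le, h1m', h1mpos]
  -- membership of the claimed sup in the set
  have hmem : (((θs * x - ν * (xs - 1) : ℝ)) : EReal) ∈ {y : EReal | ∃ θ : ℝ,
      y = ((θ * x : ℝ) : EReal)
          - (if θ ≤ θc then (((ν * (f θ - 1) : ℝ)) : EReal) else (⊤ : EReal))} := by
    refine ⟨θs, ?_⟩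
    rw [if_pos hθs, ← hxsf, ← EReal.coe_sub]
  constructor
  · rintro z ⟨θ, rfl⟩
    by_cases hθ : θ ≤ θc
    · rw [if_pos hθ, ← EReal.coe_sub, EReal.coe_le_coe_iff]
      exact key θ hθ
    · rw [if_neg hθ]
      rw [EReal.sub_top]; exact bot_le
  · intro b hb
    exact hb hmem
end

section
/- The minimal-solution function $f$ satisfies $f(0) = 1$, $f$ is strictly increasing on $(-\infty, \theta_c]$, and $f(\theta_c) = x_c$. -/
open MeasureTheory Filter Set

/-- the minimal-solution function `f` satisfies `f(0) = 1`,
is strictly increasing on `(-∞, θ_c]`, and `f(θ_c) = x_c`. -/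
theorem stmt_8 {X : Type*} [MeasurableSpace X] (q : Measure X) [IsProbabilityMeasure q]
    (H : X → ℝ) (hHmeas : Measurable H) (hHnonneg : ∀ a, 0 ≤ H a)
    (hHmean : ∫ a, H a ∂q < 1)
    (hint : ∀ x : ℝ, Integrable (fun a => Real.exp (x * H a)) q)
    (hgrow : Tendsto (fun x : ℝ => (∫ a, Real.exp (x * H a) ∂q) - x) atTop atTop)
    (xc θc : ℝ) (hxc : 1 < xc) (hθc : 0 < θc)
    (hxceq : xc * ∫ a, H a * Real.exp (H a * (xc - 1)) ∂q
      = ∫ a, Real.exp (H a * (xc - 1)) ∂q)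
    (hθceq : θc = -Real.log (∫ a, H a * Real.exp (H a * (xc - 1)) ∂q))
    (f : ℝ → ℝ)
    (hf : ∀ θ ≤ θc,
      IsLeast {y : ℝ | 0 ≤ y ∧ y = Real.exp θ * ∫ a, Real.exp (H a * (y - 1)) ∂q} (f θ)) :
    f 0 = 1 ∧ StrictMonoOn f (Iic θc) ∧ f θc = xc := by
  set φ : ℝ → ℝ := fun y => ∫ a, Real.exp (H a * (y - 1)) ∂q with hφ
  -- integrability of the integrand for every y
  have hint' : ∀ y : ℝ, Integrable (fun a => Real.exp (H a * (y - 1))) q := by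
    intro y
    have := hint (y - 1)
    simpa [mul_comm] using this
  -- positivity of φ
  have hφpos : ∀ y : ℝ, 0 < φ y := by
    intro y
    exact integral_exp_pos (hint' y)
  -- Integrability of H
  have hHint : Integrable H q := by
    refine (hint 1).mono hHmeas.aestronglyMeasurable (Eventually.of_forall fun a => ?_)
    have h1 : H a ≤ Real.exp (1 * H a) := by
      have := Real.add_one_le_exp (H a)
      simpa using by linarith
    have h0 := hHnonneg a
    simp only [Real.norm_eq_abs, abs_of_nonneg h0, abs_of_nonneg (Real.exp_pos _).le]
    exact h1
  -- Integrability of a ↦ H a * exp (H a * (xc - 1))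
  have hIint : Integrable (fun a => H a * Real.exp (H a * (xc - 1))) q := by
    refine (hint xc).mono ((hHmeas.mul ((hHmeas.mul_const _).exp)).aestronglyMeasurable)
      (Eventually.of_forall fun a => ?_)
    have h0 := hHnonneg a
    have hHe : H a ≤ Real.exp (H a) := by
      have := Real.add_one_le_exp (H a); linarith
    have h2 : H a * Real.exp (H a * (xc - 1)) ≤ Real.exp (H a) * Real.exp (H a * (xc - 1)) :=
      mul_le_mul_of_nonneg_right hHe (Real.exp_pos _).le
    have h3 : Real.exp (H a) * Real.exp (H a * (xc - 1)) = Real.exp (xc * H a) := by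
      rw [← Real.exp_add]; ring_nf
    simp only [Real.norm_eq_abs, abs_of_nonneg (mul_nonneg h0 (Real.exp_pos _).le),
      abs_of_nonneg (Real.exp_pos _).le]
    calc H a * Real.exp (H a * (xc - 1)) ≤ Real.exp (H a) * Real.exp (H a * (xc - 1)) := h2
      _ = Real.exp (xc * H a) := h3
  set I : ℝ := ∫ a, H a * Real.exp (H a * (xc - 1)) ∂q with hI
  -- 1 ≤ φ xc
  have hφxc1 : 1 ≤ φ xc := by
    have : ∫ (_ : X), (1 : ℝ) ∂q ≤ φ xc := by
      refine integral_mono (integrable_const 1) (hint' xc) fun a => ?_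
      exact Real.one_le_exp (mul_nonneg (hHnonneg a) (by linarith))
    simpa using this
  have hIpos : 0 < I := by
    rcases (integral_nonneg fun a => mul_nonneg (hHnonneg a) (Real.exp_pos _).le :
        (0:ℝ) ≤ I).lt_or_eq with h | h
    · exact h
    · exfalso
      have hI0 : I = 0 := hI.trans h.symm
      have hphi : xc * I = φ xc := hxceq
      rw [hI0, mul_zero] at hphi
      linarith
  have heθc : Real.exp θc = I⁻¹ := by
    rw [hθceq, Real.exp_neg, Real.exp_log hIpos]
  -- continuity of φ
  have hφcont : Continuous φ := by
    rw [continuous_iff_continuousAt]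
    intro y0
    refine continuousAt_of_dominated (bound := fun a => Real.exp ((|y0| + 1) * H a))
      (Eventually.of_forall fun y => ((hHmeas.mul_const _).exp).aestronglyMeasurable)
      ?_ (hint (|y0| + 1)) (Eventually.of_forall fun a => by fun_prop)
    filter_upwards [Metric.ball_mem_nhds y0 one_pos] with y hy
    filter_upwards with a
    have hy' : |y - y0| < 1 := by simpa [Real.dist_eq] using hy
    have h1 : y - 1 ≤ |y0| + 1 := by
      have := abs_sub_abs_le_abs_sub y y0
      have := le_abs_self y
      linarith [abs_nonneg y0]
    have : H a * (y - 1) ≤ (|y0| + 1) * H a := by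
      have := mul_le_mul_of_nonneg_left h1 (hHnonneg a)
      linarith [this]
    simpa [Real.norm_eq_abs, abs_of_nonneg (Real.exp_pos _).le] using Real.exp_le_exp.2 this
  -- key lower bound: for y < 1, y < φ y
  have hbelow1 : ∀ y : ℝ, y < 1 → y < φ y := by
    intro y hy
    have hmono : ∫ a, (1 + H a * (y - 1)) ∂q ≤ φ y := by
      refine integral_mono ((integrable_const 1).add (hHint.mul_const _)) (hint' y) fun a => ?_
      have := Real.add_one_le_exp (H a * (y - 1))
      dsimp; linarith
    have hcalc : ∫ a, (1 + H a * (y - 1)) ∂q = 1 + (∫ a, H a ∂q) * (y - 1) := by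
      rw [integral_add (integrable_const 1) (hHint.mul_const _), integral_mul_const]
      simp
    rw [hcalc] at hmono
    nlinarith [hHmean, hy]
  -- membership of 1 at θ = 0
  have h1mem : (1:ℝ) ∈ {y : ℝ | 0 ≤ y ∧ y = Real.exp 0 * φ y} := by
    constructor
    · norm_num
    · simp [hφ]
  -- f 0 = 1
  have hf0 := hf 0 hθc.le
  have hf0eq : f 0 = 1 := by
    have hle : f 0 ≤ 1 := hf0.2 h1mem
    by_contra hne
    have hlt : f 0 < 1 := lt_of_le_of_ne hle hne
    have heq : f 0 = Real.exp 0 * φ (f 0) := hf0.1.2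
    rw [Real.exp_zero, one_mul] at heq
    exact absurd heq (ne_of_lt (hbelow1 _ hlt))
  -- key lower bound near xc: for 0 ≤ y < xc, I * y < φ y
  have hbelowxc : ∀ y : ℝ, y < xc → I * y < φ y := by
    intro y hy
    set d : X → ℝ := fun a =>
      Real.exp (H a * (y - 1)) - Real.exp (H a * (xc - 1))
        - H a * Real.exp (H a * (xc - 1)) * (y - xc) with hd
    have hdnonneg : ∀ a, 0 ≤ d a := by
      intro a
      have h0 := hHnonneg a
      have hts : H a * (y - 1) - H a * (xc - 1) = H a * (y - xc) := by ring
      have h1 := Real.add_one_le_exp (H a * (y - 1) - H a * (xc - 1))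
      have h2 : Real.exp (H a * (y - 1) - H a * (xc - 1)) * Real.exp (H a * (xc - 1))
          = Real.exp (H a * (y - 1)) := by rw [← Real.exp_add]; ring_nf
      have h3 := Real.exp_pos (H a * (xc - 1))
      simp only [hd]
      nlinarith [mul_le_mul_of_nonneg_right h1 h3.le]
    have hdpos : ∀ a, H a ≠ 0 → 0 < d a := by
      intro a ha
      have h0 := hHnonneg a
      have hne : H a * (y - 1) - H a * (xc - 1) ≠ 0 := by
        have : H a * (y - 1) - H a * (xc - 1) = H a * (y - xc) := by ring
        rw [this]
        exact mul_ne_zero ha (by linarith)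
      have h1 := Real.add_one_lt_exp hne
      have h2 : Real.exp (H a * (y - 1) - H a * (xc - 1)) * Real.exp (H a * (xc - 1))
          = Real.exp (H a * (y - 1)) := by rw [← Real.exp_add]; ring_nf
      have h3 := Real.exp_pos (H a * (xc - 1))
      simp only [hd]
      nlinarith [mul_lt_mul_of_pos_right h1 h3]
    have hdint : Integrable d q := ((hint' y).sub (hint' xc)).sub (hIint.mul_const _)
    have hsuppI : 0 < q (Function.support fun a => H a * Real.exp (H a * (xc - 1))) := by
      rw [← integral_pos_iff_support_of_nonneg_ae
        (Eventually.of_forall fun a => mul_nonneg (hHnonneg a) (Real.exp_pos _).le) hIint]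
      exact hIpos
    have hsupp : Function.support (fun a => H a * Real.exp (H a * (xc - 1)))
        ⊆ Function.support d := by
      intro a ha
      have haH : H a ≠ 0 := by
        intro h; apply ha; simp [Function.mem_support, h] at ha ⊢
      exact (hdpos a haH).ne'
    have hdintpos : 0 < ∫ a, d a ∂q := by
      rw [integral_pos_iff_support_of_nonneg_ae (Eventually.of_forall hdnonneg) hdint]
      exact lt_of_lt_of_le hsuppI (measure_mono hsupp)
    have hsplit : ∫ a, d a ∂q = φ y - φ xc - I * (y - xc) := by
      have i1 : Integrable (fun a => Real.exp (H a * (y - 1)) - Real.exp (H a * (xc - 1))) q :=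
        (hint' y).sub (hint' xc)
      have e2 : ∫ a, d a ∂q
          = (∫ a, (Real.exp (H a * (y - 1)) - Real.exp (H a * (xc - 1))) ∂q)
            - ∫ a, H a * Real.exp (H a * (xc - 1)) * (y - xc) ∂q :=
        integral_sub i1 (hIint.mul_const _)
      have e1 : ∫ a, (Real.exp (H a * (y - 1)) - Real.exp (H a * (xc - 1))) ∂q = φ y - φ xc :=
        integral_sub (hint' y) (hint' xc)
      have e3 : ∫ a, H a * Real.exp (H a * (xc - 1)) * (y - xc) ∂q = I * (y - xc) :=
        integral_mul_const _ _
      rw [e2, e1, e3]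
    have hφxcI : φ xc = xc * I := hxceq.symm
    rw [hsplit] at hdintpos
    nlinarith
  -- f θc = xc
  have hfθc := hf θc le_rfl
  have hxcmem : xc ∈ {y : ℝ | 0 ≤ y ∧ y = Real.exp θc * φ y} := by
    refine ⟨by linarith, ?_⟩
    rw [heθc]
    have : φ xc = xc * I := hxceq.symm
    rw [this]
    field_simp
  have hfθceq : f θc = xc := by
    have hle : f θc ≤ xc := hfθc.2 hxcmem
    by_contra hne
    have hlt : f θc < xc := lt_of_le_of_ne hle hne
    have heq : f θc = Real.exp θc * φ (f θc) := hfθc.1.2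
    rw [heθc] at heq
    have hφval : φ (f θc) = I * f θc := by
      field_simp at heq
      linarith [heq]
    exact absurd hφval.symm (ne_of_lt (hbelowxc _ hlt))
  -- strict monotonicity
  refine ⟨hf0eq, ?_, hfθceq⟩
  intro θ1 h1 θ2 h2 h12
  have hf1 := hf θ1 (le_trans h12.le h2)
  have hf2 := hf θ2 h2
  have hy2eq : f θ2 = Real.exp θ2 * φ (f θ2) := hf2.1.2
  have hy2pos : 0 < f θ2 := by
    rw [hy2eq]; exact mul_pos (Real.exp_pos _) (hφpos _)
  set g : ℝ → ℝ := fun y => Real.exp θ1 * φ y - y with hg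
  have hgcont : Continuous g := (continuous_const.mul hφcont).sub continuous_id
  have hg0 : 0 < g 0 := by
    simp only [hg]
    simpa using mul_pos (Real.exp_pos _) (hφpos 0)
  have hgy2 : g (f θ2) < 0 := by
    simp only [hg]
    have : Real.exp θ1 * φ (f θ2) < Real.exp θ2 * φ (f θ2) :=
      mul_lt_mul_of_pos_right (Real.exp_lt_exp.2 h12) (hφpos _)
    linarith [hy2eq]
  have hivt := intermediate_value_Icc' hy2pos.le (hgcont.continuousOn (s := Icc 0 (f θ2)))
  have h0mem : (0:ℝ) ∈ Icc (g (f θ2)) (g 0) := ⟨hgy2.le, hg0.le⟩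
  obtain ⟨r, hr, hgr⟩ := hivt h0mem
  have hrfix : r = Real.exp θ1 * φ r := by
    simp only [hg] at hgr; linarith
  have hle1 : f θ1 ≤ r := hf1.2 ⟨hr.1, hrfix⟩
  have hrne : r ≠ f θ2 := by
    intro h
    rw [h] at hgr
    linarith
  have hrlt : r < f θ2 := lt_of_le_of_ne hr.2 hrne
  linarith
end

section
/- For every $\theta < \theta_c$ one has $\int_{\mathbb{X}} H(a) e^{\theta + (f(\theta)-1)H(a)} q(da) < 1$, the minimal-solution function $f$ is differentiable at $\theta$, and its derivative satisfies the implicit relation $f'(\theta) = \int_{\mathbb{X}} (1 + f'(\theta) H(a)) e^{\theta + (f(\theta)-1)H(a)} q(da)$, equivalently $f'(\theta) = \frac{f(\theta)}{1 - \int_{\mathbb{X}} H(a) e^{\theta + (f(\theta)-1)H(a)} q(da)}$. -/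
/-!
Write `M` for the moment generating function of `H` under `q`, so that `f θ` is the least
nonnegative fixed point of `y ↦ exp θ * M (y - 1)`. For `θ ≤ θc` this map lies above the diagonal
at `0` and below it at `xc`, so `f θ ≤ xc`. Since `M'` is increasing, `M (· - 1)` is Lipschitz on
`(-∞, xc]` with constant `M' (xc - 1) = exp (-θc)`; for `θ < θc` the fixed-point map is therefore
a contraction there, which makes `f` continuous at `θ` and gives `exp θ * M' (f θ - 1) < 1`.
Finally `θ = log (f θ) - log M (f θ - 1)`, and the one-dimensional inverse function theorem
differentiates `f` as the local inverse of `y ↦ log y - log M (y - 1)`.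
-/

open MeasureTheory Filter Set Topology ProbabilityTheory Real

theorem IsLeast.le_of_apply_le {g : ℝ → ℝ} {z x : ℝ} (hz : IsLeast {y | 0 ≤ y ∧ y = g y} z)
    (hg : ContinuousOn g (Icc 0 x)) (hg0 : 0 ≤ g 0) (hx : 0 ≤ x) (hgx : g x ≤ x) : z ≤ x := by
  obtain ⟨y, hy, hgy⟩ : ∃ y ∈ Icc 0 x, g y - y = 0 :=
    intermediate_value_Icc' hx (hg.sub continuousOn_id) ⟨show g x - x ≤ 0 by linarith,
      show 0 ≤ g 0 - 0 by linarith⟩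
  exact (hz.2 ⟨hy.1, by linarith⟩).trans hy.2

theorem continuousAt_of_eq_mul_comp {c G f : ℝ → ℝ} {s : Set ℝ} {K θ : ℝ}
    (hc : ContinuousAt c θ) (hcK : |c θ| * K < 1)
    (hG : ∀ u ∈ s, ∀ v ∈ s, |G u - G v| ≤ K * |u - v|)
    (hfs : ∀ᶠ θ' in 𝓝 θ, f θ' ∈ s) (hfix : ∀ᶠ θ' in 𝓝 θ, f θ' = c θ' * G (f θ')) :
    ContinuousAt f θ := by
  have hden : Tendsto (fun θ' => 1 - |c θ'| * K) (𝓝 θ) (𝓝 (1 - |c θ| * K)) :=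
    tendsto_const_nhds.sub (hc.abs.mul_const K)
  have hbound : ∀ᶠ θ' in 𝓝 θ,
      |f θ' - f θ| ≤ |c θ' - c θ| * |G (f θ)| / (1 - |c θ'| * K) := by
    filter_upwards [hden.eventually_const_lt (show (0 : ℝ) < 1 - |c θ| * K by linarith), hfs, hfix]
      with θ' hpos hs' hfix'
    rw [le_div_iff₀ hpos]
    have hLip := mul_le_mul_of_nonneg_left (hG _ hs' _ hfs.self_of_nhds) (abs_nonneg (c θ'))
    have hsplit : f θ' - f θ = c θ' * (G (f θ') - G (f θ)) + (c θ' - c θ) * G (f θ) := by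
      linear_combination hfix' - hfix.self_of_nhds
    have := abs_add_le (c θ' * (G (f θ') - G (f θ))) ((c θ' - c θ) * G (f θ))
    rw [abs_mul, abs_mul, ← hsplit] at this
    nlinarith
  have hlim : Tendsto (fun θ' => |c θ' - c θ| * |G (f θ)| / (1 - |c θ'| * K)) (𝓝 θ) (𝓝 0) := by
    have := ((hc.sub_const (c θ)).abs.mul_const |G (f θ)|).div hden (by linarith)
    rwa [sub_self, abs_zero, zero_mul, zero_div] at this
  rw [ContinuousAt, tendsto_iff_norm_sub_tendsto_zero]
  exact squeeze_zero' (Eventually.of_forall fun _ => norm_nonneg _) hbound hlim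

theorem hasDerivAt_of_eq_exp_mul_comp {G f : ℝ → ℝ} {G' θ : ℝ}
    (hf : ContinuousAt f θ) (hfθ : f θ ≠ 0) (hG : HasDerivAt G G' (f θ))
    (hk : exp θ * G' ≠ 1) (hfix : ∀ᶠ θ' in 𝓝 θ, f θ' = exp θ' * G (f θ')) :
    HasDerivAt f (f θ / (1 - exp θ * G')) θ := by
  have hGne : ∀ θ', f θ' ≠ 0 → f θ' = exp θ' * G (f θ') → G (f θ') ≠ 0 := by
    intro θ' h0 h hG0
    rw [hG0, mul_zero] at h
    exact h0 h
  have hGθ := hGne θ hfθ hfix.self_of_nhds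
  have hinv : HasDerivAt (fun y => log y - log (G y)) ((f θ)⁻¹ - G' / G (f θ)) (f θ) :=
    (hasDerivAt_log hfθ).sub (hG.log hGθ)
  have hleft : ∀ᶠ θ' in 𝓝 θ, log (f θ') - log (G (f θ')) = θ' := by
    filter_upwards [hfix, hf.eventually_ne hfθ] with θ' h h0
    calc log (f θ') - log (G (f θ')) = log (exp θ' * G (f θ')) - log (G (f θ')) := by rw [← h]
      _ = θ' := by rw [log_mul (exp_ne_zero θ') (hGne θ' h0 h), log_exp]; ring
  have hden : 1 - exp θ * G' ≠ 0 := sub_ne_zero.2 (Ne.symm hk)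
  have hGval : G (f θ) = f θ / exp θ := by
    rw [eq_div_iff (exp_ne_zero θ)]
    linear_combination -hfix.self_of_nhds
  have hval : (f θ)⁻¹ - G' / G (f θ) = (1 - exp θ * G') / f θ := by
    rw [hGval]
    field_simp
  have := hinv.of_local_left_inverse hf (by rw [hval]; exact div_ne_zero hden hfθ) hleft
  rwa [hval, inv_div] at this

section MGF

variable {Ω : Type*} [MeasurableSpace Ω] {μ : Measure Ω} {X : Ω → ℝ}

theorem mem_interior_integrableExpSet (hX : ∀ t, Integrable (fun ω => exp (t * X ω)) μ) (t : ℝ) :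
    t ∈ interior (integrableExpSet X μ) := by
  rw [show integrableExpSet X μ = univ from eq_univ_of_forall hX, interior_univ]
  trivial

theorem integrable_mul_exp_mul (hX : ∀ t, Integrable (fun ω => exp (t * X ω)) μ) (t : ℝ) :
    Integrable (fun ω => X ω * exp (t * X ω)) μ := by
  simpa using integrable_pow_mul_exp_of_mem_interior_integrableExpSet
    (mem_interior_integrableExpSet hX t) 1

theorem integral_mul_exp_mul_nonneg (hX0 : 0 ≤ X) (t : ℝ) :
    0 ≤ ∫ ω, X ω * exp (t * X ω) ∂μ :=
  integral_nonneg fun ω => mul_nonneg (hX0 ω) (exp_pos _).le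

theorem monotone_integral_mul_exp_mul (hX0 : 0 ≤ X)
    (hX : ∀ t, Integrable (fun ω => exp (t * X ω)) μ) :
    Monotone fun t => ∫ ω, X ω * exp (t * X ω) ∂μ := fun s t hst =>
  integral_mono (integrable_mul_exp_mul hX s) (integrable_mul_exp_mul hX t) fun ω =>
    mul_le_mul_of_nonneg_left (exp_le_exp.2 (mul_le_mul_of_nonneg_right hst (hX0 ω))) (hX0 ω)

theorem abs_mgf_sub_le (hX0 : 0 ≤ X) (hX : ∀ t, Integrable (fun ω => exp (t * X ω)) μ)
    {s t T : ℝ} (hs : s ≤ T) (ht : t ≤ T) :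
    |mgf X μ s - mgf X μ t| ≤ (∫ ω, X ω * exp (T * X ω) ∂μ) * |s - t| :=
  Convex.norm_image_sub_le_of_norm_hasDerivWithin_le
    (fun x _ => (hasDerivAt_mgf (mem_interior_integrableExpSet hX x)).hasDerivWithinAt)
    (fun x hx => by
      rw [norm_of_nonneg (integral_mul_exp_mul_nonneg hX0 x)]
      exact monotone_integral_mul_exp_mul hX0 hX hx)
    (convex_Iic T) ht hs

theorem integral_mul_exp_add_mul (g : Ω → ℝ) (θ t : ℝ) :
    ∫ ω, g ω * exp (θ + t * X ω) ∂μ = exp θ * ∫ ω, g ω * exp (t * X ω) ∂μ := by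
  simp_rw [exp_add, mul_left_comm _ (exp θ)]
  exact integral_const_mul _ _

theorem integral_one_add_mul_mul_exp_mul (hX : ∀ t, Integrable (fun ω => exp (t * X ω)) μ)
    (d t : ℝ) :
    ∫ ω, (1 + d * X ω) * exp (t * X ω) ∂μ = mgf X μ t + d * ∫ ω, X ω * exp (t * X ω) ∂μ := by
  simp_rw [add_mul, one_mul, mul_assoc]
  rw [integral_add (hX t) ((integrable_mul_exp_mul hX t).const_mul d), integral_const_mul, mgf]

theorem IsLeast.le_of_exp_mul_mgf_le [IsProbabilityMeasure μ]
    (hX : ∀ t, Integrable (fun ω => exp (t * X ω)) μ) {θ z x : ℝ}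
    (hz : IsLeast {y | 0 ≤ y ∧ y = exp θ * mgf X μ (y - 1)} z) (hx : 0 ≤ x)
    (hθx : exp θ * mgf X μ (x - 1) ≤ x) : z ≤ x :=
  hz.le_of_apply_le
    (continuous_const.mul ((continuous_mgf hX).comp (continuous_sub_right 1))).continuousOn
    (mul_pos (exp_pos θ) (mgf_pos (hX _))).le hx hθx

theorem hasDerivAt_of_eq_exp_mul_mgf [IsProbabilityMeasure μ] (hX0 : 0 ≤ X)
    (hX : ∀ t, Integrable (fun ω => exp (t * X ω)) μ) {f : ℝ → ℝ} {θ T : ℝ}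
    (hfT : ∀ᶠ θ' in 𝓝 θ, f θ' ≤ T)
    (hfix : ∀ᶠ θ' in 𝓝 θ, f θ' = exp θ' * mgf X μ (f θ' - 1))
    (hT : exp θ * ∫ ω, X ω * exp ((T - 1) * X ω) ∂μ < 1) :
    HasDerivAt f (f θ / (1 - exp θ * ∫ ω, X ω * exp ((f θ - 1) * X ω) ∂μ)) θ := by
  have hcont : ContinuousAt f θ :=
    continuousAt_of_eq_mul_comp (G := fun y => mgf X μ (y - 1)) (s := Iic T)
      continuous_exp.continuousAt (by rwa [abs_of_pos (exp_pos θ)])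
      (fun u hu v hv => by
        simpa using abs_mgf_sub_le hX0 hX (sub_le_sub_right hu 1) (sub_le_sub_right hv 1))
      hfT hfix
  refine hasDerivAt_of_eq_exp_mul_comp hcont ?_
    ((hasDerivAt_mgf (mem_interior_integrableExpSet hX _)).comp_sub_const _ 1) ?_ hfix
  · rw [hfix.self_of_nhds]
    exact (mul_pos (exp_pos θ) (mgf_pos (hX _))).ne'
  · refine (lt_of_le_of_lt (mul_le_mul_of_nonneg_left ?_ (exp_pos θ).le) hT).ne
    exact monotone_integral_mul_exp_mul hX0 hX (sub_le_sub_right hfT.self_of_nhds 1)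

end MGF

theorem stmt_9_general {X : Type*} [MeasurableSpace X] (q : Measure X) [IsProbabilityMeasure q]
    (H : X → ℝ) (hHnonneg : ∀ a, 0 ≤ H a)
    (hint : ∀ x : ℝ, Integrable (fun a => Real.exp (x * H a)) q)
    (xc θc : ℝ) (hxc : 1 < xc)
    (hxceq : xc * ∫ a, H a * Real.exp (H a * (xc - 1)) ∂q
      = ∫ a, Real.exp (H a * (xc - 1)) ∂q)
    (hθceq : θc = -Real.log (∫ a, H a * Real.exp (H a * (xc - 1)) ∂q))
    (f : ℝ → ℝ)
    (hf : ∀ θ ≤ θc,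
      IsLeast {y : ℝ | 0 ≤ y ∧ y = Real.exp θ * ∫ a, Real.exp (H a * (y - 1)) ∂q} (f θ)) :
    ∀ θ < θc,
      (∫ a, H a * Real.exp (θ + (f θ - 1) * H a) ∂q) < 1 ∧
      ∃ d : ℝ, HasDerivAt f d θ ∧
        d = ∫ a, (1 + d * H a) * Real.exp (θ + (f θ - 1) * H a) ∂q ∧
        d = f θ / (1 - ∫ a, H a * Real.exp (θ + (f θ - 1) * H a) ∂q) := by
  intro θ hθ
  have hmgf (y : ℝ) : ∫ a, exp ((y - 1) * H a) ∂q = mgf H q (y - 1) := rfl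
  simp only [hmgf, mul_comm (H _) (_ - 1)] at hf hxceq hθceq
  set m := ∫ a, H a * exp ((xc - 1) * H a) ∂q
  have hm : 0 < m := pos_of_mul_pos_right (hxceq ▸ mgf_pos (hint _)) (by linarith)
  have hθcm : exp θc * m = 1 := by rw [hθceq, exp_neg, exp_log hm, inv_mul_cancel₀ hm.ne']
  have hfix θ' (h : θ' ≤ θc) : f θ' = exp θ' * mgf H q (f θ' - 1) := (hf θ' h).1.2
  have hfle θ' (h : θ' ≤ θc) : f θ' ≤ xc := (hf θ' h).le_of_exp_mul_mgf_le hint (by linarith) <|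
    calc exp θ' * mgf H q (xc - 1) ≤ exp θc * mgf H q (xc - 1) :=
          mul_le_mul_of_nonneg_right (exp_le_exp.2 h) (mgf_pos (hint _)).le
      _ = xc := by rw [← hxceq, mul_left_comm, hθcm, mul_one]
  have hθm : exp θ * m < 1 := hθcm ▸ mul_lt_mul_of_pos_right (exp_lt_exp.2 hθ) hm
  set k := exp θ * ∫ a, H a * exp ((f θ - 1) * H a) ∂q with hkdef
  have hk : k < 1 := lt_of_le_of_lt (mul_le_mul_of_nonneg_left
    (monotone_integral_mul_exp_mul hHnonneg hint (by linarith [hfle θ hθ.le])) (exp_pos θ).le) hθm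
  have hnear : ∀ᶠ θ' in 𝓝 θ, θ' ≤ θc := (eventually_lt_nhds hθ).mono fun _ => le_of_lt
  have hderiv : HasDerivAt f (f θ / (1 - k)) θ :=
    hasDerivAt_of_eq_exp_mul_mgf hHnonneg hint (hnear.mono hfle) (hnear.mono hfix) hθm
  refine ⟨by rwa [integral_mul_exp_add_mul], _, hderiv, ?_, by rw [integral_mul_exp_add_mul]⟩
  rw [integral_mul_exp_add_mul, integral_one_add_mul_mul_exp_mul hint, mul_add, ← hfix θ hθ.le]
  have hd : f θ / (1 - k) * (1 - k) = f θ := div_mul_cancel₀ _ (sub_pos.2 hk).ne'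
  linear_combination hd + f θ / (1 - k) * hkdef

/-- for `θ < θ_c` one has `∫ H e^{θ + (f(θ)-1)H} dq < 1`, `f` is
differentiable at `θ`, and `f'(θ) = ∫ (1 + f'(θ) H) e^{θ + (f(θ)-1)H} dq`,
equivalently `f'(θ) = f(θ) / (1 - ∫ H e^{θ + (f(θ)-1)H} dq)`. -/
theorem stmt_9 {X : Type*} [MeasurableSpace X] (q : Measure X) [IsProbabilityMeasure q]
    (H : X → ℝ) (hHmeas : Measurable H) (hHnonneg : ∀ a, 0 ≤ H a)
    (hHmean : ∫ a, H a ∂q < 1)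
    (hint : ∀ x : ℝ, Integrable (fun a => Real.exp (x * H a)) q)
    (hgrow : Tendsto (fun x : ℝ => (∫ a, Real.exp (x * H a) ∂q) - x) atTop atTop)
    (xc θc : ℝ) (hxc : 1 < xc) (hθc : 0 < θc)
    (hxceq : xc * ∫ a, H a * Real.exp (H a * (xc - 1)) ∂q
      = ∫ a, Real.exp (H a * (xc - 1)) ∂q)
    (hθceq : θc = -Real.log (∫ a, H a * Real.exp (H a * (xc - 1)) ∂q))
    (f : ℝ → ℝ)
    (hf : ∀ θ ≤ θc,
      IsLeast {y : ℝ | 0 ≤ y ∧ y = Real.exp θ * ∫ a, Real.exp (H a * (y - 1)) ∂q} (f θ)) :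
    ∀ θ < θc,
      (∫ a, H a * Real.exp (θ + (f θ - 1) * H a) ∂q) < 1 ∧
      ∃ d : ℝ, HasDerivAt f d θ ∧
        d = ∫ a, (1 + d * H a) * Real.exp (θ + (f θ - 1) * H a) ∂q ∧
        d = f θ / (1 - ∫ a, H a * Real.exp (θ + (f θ - 1) * H a) ∂q) :=
  stmt_9_general q H hHnonneg hint xc θc hxc hxceq hθceq f hf
end

section
/- Let $\theta \in \mathbb{R}$ and suppose the equation $x = \int_{\mathbb{X}} e^{\theta + H(a)(x-1)} q(da)$ has a minimal solution $x_* \geq 1$. Suppose $F : [0,\infty) \to [1, x_*]$ is nondecreasing and satisfies the functional equation $F(t) = \int_{\mathbb{X}} \exp\left(\theta + \int_0^t h(s,a)(F(t-s) - 1)\, ds\right) q(da)$ for all $t \geq 0$. Then $F(t) \to x_*$ as $t \to \infty$. -/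
open MeasureTheory Filter Set Topology

/-
The limit `L` of the bounded nondecreasing function `F` exists and lies in `[1, x_*]`. Letting
`t → ∞` in the functional equation, by dominated convergence (first in `s`, with dominating
function `h(s,a)(x_* - 1)`, then in `a`, with dominating function `e^{θ + H(a)(x_* - 1)}`, which is
integrable because its integral is `x_* ≥ 1`), shows that `L` solves the fixed-point equation.
Minimality of `x_*` then forces `L = x_*`.
-/

lemma MonotoneOn.monotone_comp_max {F : ℝ → ℝ} {a : ℝ} (hF : MonotoneOn F (Ici a)) :
    Monotone fun t => F (max t a) :=
  fun s t hst => hF (le_max_right s a) (le_max_right t a) (max_le_max hst le_rfl)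

lemma intervalIntegral_eq_integral_Ioi_indicator (f : ℝ → ℝ) {t : ℝ} (ht : 0 ≤ t) :
    ∫ s in (0 : ℝ)..t, f s = ∫ s in Ioi 0, (Ioc 0 t).indicator f s := by
  rw [intervalIntegral.integral_of_le ht, integral_indicator measurableSet_Ioc,
    Measure.restrict_restrict measurableSet_Ioc, Ioc_inter_Ioi, max_self]

lemma Measurable.intervalIntegral_prod_right {X : Type*} [MeasurableSpace X] {f : X → ℝ → ℝ}
    (hf : Measurable (Function.uncurry f)) (u v : ℝ) :
    Measurable fun a => ∫ s in u..v, f a s :=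
  (hf.stronglyMeasurable.integral_prod_right.measurable).sub
    hf.stronglyMeasurable.integral_prod_right.measurable

theorem tendsto_intervalIntegral_mul_comp_sub {k g : ℝ → ℝ} {M c : ℝ}
    (hk : IntegrableOn k (Ioi 0)) (hg : Measurable g) (hgM : ∀ x, |g x| ≤ M)
    (hgc : Tendsto g atTop (𝓝 c)) :
    Tendsto (fun t => ∫ s in (0 : ℝ)..t, k s * g (t - s)) atTop
      (𝓝 ((∫ s in Ioi 0, k s) * c)) := by
  rw [← integral_mul_const]
  refine (tendsto_integral_filter_of_dominated_convergence
    (F := fun t s => (Ioc 0 t).indicator (fun s => k s * g (t - s)) s) (fun s => |k s| * M)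
    (Eventually.of_forall fun t => ?_) (Eventually.of_forall fun t => ?_)
    (hk.norm.mul_const M) ?_).congr' ?_
  · exact (hk.aestronglyMeasurable.mul
      (hg.comp (measurable_const.sub measurable_id)).aestronglyMeasurable).indicator
      measurableSet_Ioc
  · refine Eventually.of_forall fun s => (norm_indicator_le_norm_self _ _).trans ?_
    rw [norm_mul, Real.norm_eq_abs, Real.norm_eq_abs]
    exact mul_le_mul_of_nonneg_left (hgM _) (abs_nonneg _)
  · filter_upwards [ae_restrict_mem measurableSet_Ioi] with s hs
    refine ((hgc.comp (tendsto_atTop_add_const_right _ (-s) tendsto_id)).const_mul (k s)).congr' ?_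
    filter_upwards [eventually_ge_atTop s] with t hst
    rw [indicator_of_mem (show s ∈ Ioc 0 t from ⟨hs, hst⟩)]
    rfl
  · filter_upwards [eventually_ge_atTop 0] with t ht
    exact (intervalIntegral_eq_integral_Ioi_indicator _ ht).symm

lemma intervalIntegral_mul_comp_sub_le {k g : ℝ → ℝ} {M t : ℝ} (hk0 : ∀ s, 0 ≤ k s)
    (hk : IntegrableOn k (Ioi 0)) (hg0 : ∀ x, 0 ≤ g x) (hgM : ∀ x, g x ≤ M) (ht : 0 ≤ t) :
    ∫ s in (0 : ℝ)..t, k s * g (t - s) ≤ (∫ s in Ioi 0, k s) * M := by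
  rw [intervalIntegral_eq_integral_Ioi_indicator _ ht, ← integral_mul_const]
  refine integral_mono_of_nonneg (Eventually.of_forall fun s => ?_) (hk.mul_const M)
    (Eventually.of_forall fun s => ?_)
  · exact indicator_nonneg (fun s _ => mul_nonneg (hk0 s) (hg0 _)) s
  · exact indicator_apply_le' (fun _ => mul_le_mul_of_nonneg_left (hgM _) (hk0 s))
      (fun _ => mul_nonneg (hk0 s) ((hg0 0).trans (hgM 0)))

theorem tendsto_integral_exp_intervalIntegral_mul_comp_sub {X : Type*} [MeasurableSpace X]
    {q : Measure X} {h : ℝ → X → ℝ} {θ M c : ℝ} {g : ℝ → ℝ}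
    (hmeas : Measurable (Function.uncurry h)) (hnonneg : ∀ t a, 0 ≤ h t a)
    (hslice : ∀ᵐ a ∂q, IntegrableOn (fun t => h t a) (Ioi 0))
    (hg : Measurable g) (hg0 : ∀ x, 0 ≤ g x) (hgM : ∀ x, g x ≤ M)
    (hgc : Tendsto g atTop (𝓝 c))
    (hdom : Integrable (fun a => Real.exp (θ + (∫ t in Ioi 0, h t a) * M)) q) :
    Tendsto (fun t => ∫ a, Real.exp (θ + ∫ s in (0 : ℝ)..t, h s a * g (t - s)) ∂q) atTop
      (𝓝 (∫ a, Real.exp (θ + (∫ t in Ioi 0, h t a) * c) ∂q)) := by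
  refine tendsto_integral_filter_of_dominated_convergence _
    (Eventually.of_forall fun t => ?_) ?_ hdom ?_
  · have hinner : Measurable fun a => ∫ s in (0 : ℝ)..t, h s a * g (t - s) :=
      Measurable.intervalIntegral_prod_right (f := fun a s => h s a * g (t - s))
        ((hmeas.comp measurable_swap).mul (hg.comp (measurable_const.sub measurable_snd))) 0 t
    exact (Real.measurable_exp.comp (measurable_const.add hinner)).aestronglyMeasurable
  · filter_upwards [eventually_ge_atTop 0] with t ht
    filter_upwards [hslice] with a ha
    rw [Real.norm_of_nonneg (Real.exp_nonneg _), Real.exp_le_exp, add_le_add_iff_left]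
    exact intervalIntegral_mul_comp_sub_le (fun s => hnonneg s a) ha hg0 hgM ht
  · filter_upwards [hslice] with a ha
    have hgM' : ∀ x, |g x| ≤ M := fun x => by rw [abs_of_nonneg (hg0 x)]; exact hgM x
    exact Real.continuous_exp.continuousAt.tendsto.comp
      (Tendsto.const_add θ (tendsto_intervalIntegral_mul_comp_sub ha hg hgM' hgc))

/-- if `x_*` is the minimal solution `≥ 1` of
`x = ∫ e^{θ + H(a)(x-1)} dq` and `F : [0,∞) → [1, x_*]` is nondecreasing and satisfies
the branching functional equation
`F(t) = ∫ exp(θ + ∫_0^t h(s,a)(F(t-s)-1) ds) dq`, then `F(t) → x_*` as `t → ∞`. -/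
theorem stmt_10 {X : Type*} [MeasurableSpace X] (q : Measure X) [IsProbabilityMeasure q]
    (h : ℝ → X → ℝ) (hmeas : Measurable (Function.uncurry h))
    (hnonneg : ∀ t a, 0 ≤ h t a)
    (hint : Integrable (Function.uncurry h) ((volume.restrict (Ioi (0 : ℝ))).prod q))
    (θ : ℝ) (xs : ℝ)
    (hxs : IsLeast {x : ℝ | 1 ≤ x ∧
      x = ∫ a, Real.exp (θ + (∫ t in Ioi (0 : ℝ), h t a) * (x - 1)) ∂q} xs)
    (F : ℝ → ℝ) (hFmono : MonotoneOn F (Ici 0))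
    (hFbound : ∀ t ≥ (0 : ℝ), 1 ≤ F t ∧ F t ≤ xs)
    (hFeq : ∀ t ≥ (0 : ℝ),
      F t = ∫ a, Real.exp (θ + ∫ s in (0 : ℝ)..t, h s a * (F (t - s) - 1)) ∂q) :
    Tendsto F atTop (nhds xs) := by
  set F' : ℝ → ℝ := fun t => F (max t 0)
  have hF'mono : Monotone F' := hFmono.monotone_comp_max
  have hF'bd : ∀ t, 1 ≤ F' t ∧ F' t ≤ xs := fun t => hFbound _ (le_max_right t 0)
  obtain ⟨L, hF'L⟩ : ∃ L, Tendsto F' atTop (𝓝 L) :=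
    ⟨_, tendsto_atTop_ciSup hF'mono ⟨xs, by rintro _ ⟨t, rfl⟩; exact (hF'bd t).2⟩⟩
  have hF'F : ∀ t ≥ (0 : ℝ), F' t = F t := fun t ht => by simp only [F', max_eq_left ht]
  have hFL : Tendsto F atTop (𝓝 L) :=
    hF'L.congr' (eventually_atTop.2 ⟨0, hF'F⟩)
  have hL1 : 1 ≤ L := ge_of_tendsto' hF'L fun t => (hF'bd t).1
  have hLxs : L ≤ xs := le_of_tendsto' hF'L fun t => (hF'bd t).2
  have hdom : Integrable (fun a => Real.exp (θ + (∫ t in Ioi 0, h t a) * (xs - 1))) q :=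
    Integrable.of_integral_ne_zero (by rw [← hxs.1.2]; linarith [hxs.1.1])
  have hrhs := tendsto_integral_exp_intervalIntegral_mul_comp_sub (θ := θ) hmeas hnonneg
    hint.prod_left_ae (hF'mono.measurable.sub_const 1) (fun t => by linarith [hF'bd t])
    (fun t => by linarith [hF'bd t]) (hF'L.sub_const 1) hdom
  have hFrhs : Tendsto F atTop
      (𝓝 (∫ a, Real.exp (θ + (∫ t in Ioi 0, h t a) * (L - 1)) ∂q)) := by
    refine hrhs.congr' (eventually_atTop.2 ⟨0, fun t ht => ?_⟩)
    rw [hFeq t ht]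
    refine integral_congr_ae (Eventually.of_forall fun a => ?_)
    refine congrArg (fun y => Real.exp (θ + y)) (intervalIntegral.integral_congr fun s hs => ?_)
    rw [uIcc_of_le ht] at hs
    simp only [hF'F (t - s) (by linarith [hs.2])]
  have hLfix : L = ∫ a, Real.exp (θ + (∫ t in Ioi 0, h t a) * (L - 1)) ∂q :=
    tendsto_nhds_unique hFL hFrhs
  rwa [le_antisymm hLxs (hxs.2 ⟨hL1, hLfix⟩)] at hFL
end

section
/- Let $\nu > 0$, $\lambda > 1$, and define $\Gamma(\theta) = \nu\left(\frac{1}{2}\left\{\lambda + 1 - \sqrt{(\lambda+1)^2 - 4\lambda e^\theta}\right\} - 1\right)$ for $\theta \leq \log\frac{(\lambda+1)^2}{4\lambda}$ and $\Gamma(\theta) = +\infty$ otherwise. Then for every $x > 0$, $\sup_{\theta \in \mathbb{R}} \{\theta x - \Gamma(\theta)\} = x \log\left(\frac{-2x^2 + x\sqrt{4x^2 + \nu^2(\lambda+1)^2}}{\lambda\nu^2}\right) - \nu\left(\frac{1}{2}\left\{\lambda + 1 - \frac{-2x + \sqrt{4x^2 + \nu^2(\lambda+1)^2}}{\nu}\right\}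 - 1\right)$, and the supremum is attained at $\theta = \log\left(\frac{-2x^2 + x\sqrt{4x^2 + \nu^2(\lambda+1)^2}}{\lambda\nu^2}\right)$. -/
open Filter Set

set_option maxHeartbeats 1000000 in
/-- explicit Legendre–Fenchel transform of
`Γ(θ) = ν((λ+1-√((λ+1)²-4λe^θ))/2 - 1)` for `θ ≤ log((λ+1)²/(4λ))` and `Γ = +∞`
otherwise: for every `x > 0`,
`sup_θ {θx - Γ(θ)} = x log((-2x² + x√(4x²+ν²(λ+1)²))/(λν²)) - ν((λ+1 - (-2x+√(4x²+ν²(λ+1)²))/ν)/2 - 1)`,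
attained at `θ = log((-2x² + x√(4x²+ν²(λ+1)²))/(λν²))`. -/
theorem stmt_17 (ν lam : ℝ) (hν : 0 < ν) (hlam : 1 < lam)
    (Γ : ℝ → EReal)
    (hΓ : ∀ θ : ℝ, Γ θ =
      if θ ≤ Real.log ((lam + 1) ^ 2 / (4 * lam)) then
        (((ν * ((lam + 1 - Real.sqrt ((lam + 1) ^ 2 - 4 * lam * Real.exp θ)) / 2 - 1) : ℝ))
          : EReal)
      else (⊤ : EReal))
    (x : ℝ) (hx : 0 < x) :
    IsLUB {y : EReal | ∃ θ : ℝ, y = ((θ * x : ℝ) : EReal) - Γ θ}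
      (((x * Real.log ((-2 * x ^ 2 + x * Real.sqrt (4 * x ^ 2 + ν ^ 2 * (lam + 1) ^ 2))
            / (lam * ν ^ 2))
        - ν * ((lam + 1
            - (-2 * x + Real.sqrt (4 * x ^ 2 + ν ^ 2 * (lam + 1) ^ 2)) / ν) / 2 - 1) : ℝ))
        : EReal) ∧
    ((Real.log ((-2 * x ^ 2 + x * Real.sqrt (4 * x ^ 2 + ν ^ 2 * (lam + 1) ^ 2))
          / (lam * ν ^ 2)) * x : ℝ) : EReal)
        - Γ (Real.log ((-2 * x ^ 2 + x * Real.sqrt (4 * x ^ 2 + ν ^ 2 * (lam + 1) ^ 2))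
          / (lam * ν ^ 2)))
      = (((x * Real.log ((-2 * x ^ 2 + x * Real.sqrt (4 * x ^ 2 + ν ^ 2 * (lam + 1) ^ 2))
            / (lam * ν ^ 2))
        - ν * ((lam + 1
            - (-2 * x + Real.sqrt (4 * x ^ 2 + ν ^ 2 * (lam + 1) ^ 2)) / ν) / 2 - 1) : ℝ))
        : EReal) := by
  have hlam0 : (0:ℝ) < lam := by linarith
  have hA : (0:ℝ) < lam + 1 := by linarith
  set s := Real.sqrt (4 * x ^ 2 + ν ^ 2 * (lam + 1) ^ 2) with hs
  have hrad : (0:ℝ) ≤ 4 * x ^ 2 + ν ^ 2 * (lam + 1) ^ 2 := by positivity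
  have hs2 : s ^ 2 = 4 * x ^ 2 + ν ^ 2 * (lam + 1) ^ 2 := Real.sq_sqrt hrad
  have hs0 : 0 ≤ s := Real.sqrt_nonneg _
  have hsgt : 2 * x < s := by nlinarith [mul_pos (mul_pos hν hν) (mul_pos hA hA)]
  set Estar := (-2 * x ^ 2 + x * s) / (lam * ν ^ 2) with hEstar
  have hE0 : 0 < Estar := by
    apply div_pos; nlinarith; positivity
  set ustar := (-2 * x + s) / ν with hustar
  have hustar0 : 0 < ustar := by apply div_pos; linarith; exact hν
  have hkey : 4 * lam * Estar = (lam + 1) ^ 2 - ustar ^ 2 := by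
    rw [hEstar, hustar]
    field_simp
    nlinarith [hs2]
  have h4 : lam * ν * Estar = x * ustar := by
    rw [hEstar, hustar]; field_simp
  set θstar := Real.log Estar with hθstar
  have hexp : Real.exp θstar = Estar := Real.exp_log hE0
  have hEle : Estar ≤ (lam + 1) ^ 2 / (4 * lam) := by
    rw [le_div_iff₀ (by positivity)]
    nlinarith [sq_nonneg ustar]
  have hθle : θstar ≤ Real.log ((lam + 1) ^ 2 / (4 * lam)) :=
    Real.log_le_log hE0 hEle
  have hsqstar : Real.sqrt ((lam + 1) ^ 2 - 4 * lam * Real.exp θstar) = ustar := by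
    rw [hexp]
    have : (lam + 1) ^ 2 - 4 * lam * Estar = ustar ^ 2 := by linarith
    rw [this, Real.sqrt_sq hustar0.le]
  have hΓstar : Γ θstar = ((ν * ((lam + 1 - ustar) / 2 - 1) : ℝ) : EReal) := by
    rw [hΓ θstar, if_pos hθle, hsqstar]
  clear_value s Estar ustar θstar
  -- the claimed value
  set M : ℝ := x * θstar - ν * ((lam + 1 - ustar) / 2 - 1) with hM
  have heq : ((θstar * x : ℝ) : EReal) - Γ θstar = ((M : ℝ) : EReal) := by
    rw [hΓstar, ← EReal.coe_sub]
    norm_cast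
    rw [hM]; ring
  -- upper bound
  have hub : ∀ θ : ℝ, ((θ * x : ℝ) : EReal) - Γ θ ≤ ((M : ℝ) : EReal) := by
    intro θ
    rw [hΓ θ]
    by_cases hθ : θ ≤ Real.log ((lam + 1) ^ 2 / (4 * lam))
    · rw [if_pos hθ, ← EReal.coe_sub, EReal.coe_le_coe_iff]
      set u := Real.sqrt ((lam + 1) ^ 2 - 4 * lam * Real.exp θ) with hu
      have hexpθ : Real.exp θ ≤ (lam + 1) ^ 2 / (4 * lam) := by
        calc Real.exp θ ≤ Real.exp (Real.log ((lam + 1) ^ 2 / (4 * lam))) :=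
              Real.exp_le_exp.mpr hθ
          _ = (lam + 1) ^ 2 / (4 * lam) := Real.exp_log (by positivity)
      have hradθ : (0:ℝ) ≤ (lam + 1) ^ 2 - 4 * lam * Real.exp θ := by
        rw [le_div_iff₀ (by positivity : (0:ℝ) < 4 * lam)] at hexpθ
        linarith
      have hu2 : u ^ 2 = (lam + 1) ^ 2 - 4 * lam * Real.exp θ := Real.sq_sqrt hradθ
      have hu0 : 0 ≤ u := Real.sqrt_nonneg _
      -- log bound
      have hlb : θ - θstar ≤ Real.exp θ / Estar - 1 := by
        have h := Real.log_le_sub_one_of_pos (div_pos (Real.exp_pos θ) hE0)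
        rwa [Real.log_div (Real.exp_pos θ).ne' hE0.ne', Real.log_exp, ← hθstar] at h
      clear_value u
      have h1 : x * (θ - θstar) * Estar ≤ x * (Real.exp θ - Estar) := by
        have h'' : (θ - θstar) * Estar ≤ Real.exp θ - Estar := by
          calc (θ - θstar) * Estar ≤ (Real.exp θ / Estar - 1) * Estar :=
                mul_le_mul_of_nonneg_right hlb hE0.le
            _ = Real.exp θ - Estar := by field_simp
        nlinarith [mul_le_mul_of_nonneg_left h'' hx.le]
      have h2' : 4 * lam * Real.exp θ = (lam + 1) ^ 2 - u ^ 2 := by linarith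
      have hident : (4 * lam) * (ν * (ustar - u) / 2 * Estar - x * (Real.exp θ - Estar))
          = x * (ustar - u) ^ 2 := by
        linear_combination (2 * (ustar - u)) * h4 + x * hkey - x * h2'
      have key : x * (Real.exp θ - Estar) ≤ ν * (ustar - u) / 2 * Estar := by
        have hpos : (4 * lam) * (0:ℝ) ≤ (4 * lam) *
            (ν * (ustar - u) / 2 * Estar - x * (Real.exp θ - Estar)) := by
          rw [hident, mul_zero]
          positivity
        have := le_of_mul_le_mul_left hpos (by positivity : (0:ℝ) < 4 * lam)
        linarith
      have hfin : x * (θ - θstar) ≤ ν * (ustar - u) / 2 := by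
        have := h1.trans key
        exact le_of_mul_le_mul_right (by linarith [this]) hE0
      rw [hM]; nlinarith [hfin]
    · rw [if_neg hθ]
      exact bot_le
  refine ⟨⟨?_, ?_⟩, heq⟩
  · rintro y ⟨θ, rfl⟩
    exact hub θ
  · intro b hb
    exact hb ⟨θstar, heq.symm⟩
end
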